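/- arXiv:1809.00236 — 4 statements merged into one kernel-verified Lean document; each statement's English description precedes it below -/
import Mathlib

section
/- (Optimal undersmoothing.) Under the conditions of the Edgeworth expansion for T_US (Assumptions RD with S ≥ p+1 and K, n h / log(nh)^{2+γ} → ∞, √(nh) h^{p+1} log(nh)^{1+γ} → 0 for some γ > 0), the fastest possible decay of the coverage error of the undersmoothed interval is P[τ_ν ∈ I_US(h)] = (1−α) + O(n^{-(p+1)/(p+2)}), attained by choosing h ≍ n^{-1/(p+2)}; moreover, if Q_{US,k} ≠ 0 for k=1,2,3, the coverage-error optimal bandwidth is h_US = H_US n^{-1/(p+2)} with H_US = argmin_{H>0} | H^{-1} Q_{US,1} + H^{3+2p} Q_{US,2} + H^{1+p} Q_{US,3} |. -/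
/-!
Shared setup for "Optimal Bandwidth Choice for Robust Bias Corrected Inference
in Regression Discontinuity Designs" (Calonico, Cattaneo, Farrell).
-/

noncomputable section

open MeasureTheory ProbabilityTheory Filter Asymptotics Matrix Topology

namespace RD

/-! ### Sample-level local polynomial machinery -/

/-- Power vector `r_p(u) = (1, u, …, u^p)`. -/
def rvec (p : ℕ) (u : ℝ) : Fin (p + 1) → ℝ := fun j => u ^ (j : ℕ)

/-- Coordinate unit vector `e_ν` of `ℝ^{p+1}` (one in the `(ν+1)`-th position). -/
def evec (p ν : ℕ) : Fin (p + 1) → ℝ := fun j => if (j : ℕ) = ν then 1 else 0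

/-- Right one-sided kernel `K₊(u) = 1(u ≥ 0) K(u)`. -/
def Kp (K : ℝ → ℝ) (u : ℝ) : ℝ := if 0 ≤ u then K u else 0

/-- Left one-sided kernel `K₋(u) = 1(u < 0) K(u)`. -/
def Km (K : ℝ → ℝ) (u : ℝ) : ℝ := if u < 0 then K u else 0

/-- Assumption K (kernel): `K(u) = 1(u<0)k(-u) + 1(u≥0)k(u)` with `k : [0,1] → ℝ`
bounded, continuous on its support, positive on `(0,1)`, zero outside, and either
constant or such that `(1, K(u) r_{3(p+1)}(u)')` is linearly independent on `(0,1)`. -/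
def IsRDKernel (p : ℕ) (K : ℝ → ℝ) : Prop :=
  ∃ k : ℝ → ℝ,
    (∀ u, K u = if u < 0 then k (-u) else k u) ∧
    (∃ M : ℝ, ∀ u ∈ Set.Icc (0 : ℝ) 1, |k u| ≤ M) ∧
    ContinuousOn k (Set.Icc (0 : ℝ) 1) ∧
    (∀ u ∈ Set.Ioo (0 : ℝ) 1, 0 < k u) ∧
    (∀ u, u ∉ Set.Icc (0 : ℝ) 1 → k u = 0) ∧
    ((∀ u ∈ Set.Ioo (0 : ℝ) 1, ∀ v ∈ Set.Ioo (0 : ℝ) 1, k u = k v) ∨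
      LinearIndependent ℝ (fun j : Fin (3 * (p + 1) + 2) =>
        fun u : Set.Ioo (0 : ℝ) 1 =>
          if (j : ℕ) = 0 then (1 : ℝ) else K u * (u : ℝ) ^ ((j : ℕ) - 1)))

/-- Sample Gram matrix `G = (nh)⁻¹ Σᵢ K(X_{h,i}) r_p(X_{h,i}) r_p(X_{h,i})'`
(`K` is a one-sided kernel). -/
def Gmat (K : ℝ → ℝ) (p : ℕ) {n : ℕ} (c h : ℝ) (x : Fin n → ℝ) :
    Matrix (Fin (p + 1)) (Fin (p + 1)) ℝ :=
  ((n : ℝ) * h)⁻¹ • ∑ i, K ((x i - c) / h) •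
    vecMulVec (rvec p ((x i - c) / h)) (rvec p ((x i - c) / h))

/-- `S = (nh)⁻¹ Σᵢ K(X_{h,i}) Yᵢ r_p(X_{h,i})`. -/
def SvecLP (K : ℝ → ℝ) (p : ℕ) {n : ℕ} (c h : ℝ) (x y : Fin n → ℝ) : Fin (p + 1) → ℝ :=
  ((n : ℝ) * h)⁻¹ • ∑ i, (K ((x i - c) / h) * y i) • rvec p ((x i - c) / h)

/-- Scaled one-sided weighted least squares coefficients `θ̂ = G⁻¹ S`
(so that `θ̂_j = h^j β̂_j` for the coefficients in the `(X - c)` basis). -/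
def thetaHat (K : ℝ → ℝ) (p : ℕ) {n : ℕ} (c h : ℝ) (x y : Fin n → ℝ) : Fin (p + 1) → ℝ :=
  (Gmat K p c h x)⁻¹ *ᵥ SvecLP K p c h x y

/-- One-sided local polynomial estimate of `μ^{(ν)}(c)`: `ν! e_ν'β̂ = ν! h^{-ν} e_ν'θ̂`. -/
def muHat (K : ℝ → ℝ) (p ν : ℕ) {n : ℕ} (c h : ℝ) (x y : Fin n → ℝ) : ℝ :=
  (ν.factorial : ℝ) * h ^ (-(ν : ℤ)) * (evec p ν ⬝ᵥ thetaHat K p c h x y)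

/-- The sharp RD local polynomial point estimator
`τ̂_ν(h) = ν! e_ν'β̂₊ - ν! e_ν'β̂₋`. -/
def tauHat (K : ℝ → ℝ) (p ν : ℕ) {n : ℕ} (c h : ℝ) (x y : Fin n → ℝ) : ℝ :=
  muHat (Kp K) p ν c h x y - muHat (Km K) p ν c h x y

/-- One-sided local polynomial regression residual
`ε̂ᵢ = Yᵢ - r_p(Xᵢ - c)'β̂ = Yᵢ - r_p(X_{h,i})'θ̂`. -/
def resid (K : ℝ → ℝ) (p : ℕ) {n : ℕ} (c h : ℝ) (x y : Fin n → ℝ) (i : Fin n) : ℝ :=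
  y i - rvec p ((x i - c) / h) ⬝ᵥ thetaHat K p c h x y

/-- Fixed-n HC0 plug-in variance estimator `V̂(h)` of the (scaled) conditional variance
of `τ̂_ν(h)`: `V̂ = (h/n) ν!² e_ν'(G₊⁻¹Ω₊Σ̂₊Ω₊'G₊⁻¹ + G₋⁻¹Ω₋Σ̂₋Ω₋'G₋⁻¹)e_ν`. -/
def Vhat (K : ℝ → ℝ) (p ν : ℕ) {n : ℕ} (c h : ℝ) (x y : Fin n → ℝ) : ℝ :=
  ((n : ℝ) * h)⁻¹ * (ν.factorial : ℝ) ^ 2 *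
    ∑ i, ((Kp K ((x i - c) / h)) ^ 2 *
            (evec p ν ⬝ᵥ ((Gmat (Kp K) p c h x)⁻¹ *ᵥ rvec p ((x i - c) / h))) ^ 2 *
            (resid (Kp K) p c h x y i) ^ 2
        + (Km K ((x i - c) / h)) ^ 2 *
            (evec p ν ⬝ᵥ ((Gmat (Km K) p c h x)⁻¹ *ᵥ rvec p ((x i - c) / h))) ^ 2 *
            (resid (Km K) p c h x y i) ^ 2)

/-- `Λ_{p,k} = (nh)⁻¹ Σᵢ K(X_{h,i}) X_{h,i}^{p+k} r_p(X_{h,i})` (sample version). -/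
def LamVec (K : ℝ → ℝ) (p k : ℕ) {n : ℕ} (c h : ℝ) (x : Fin n → ℝ) : Fin (p + 1) → ℝ :=
  ((n : ℝ) * h)⁻¹ • ∑ i, (K ((x i - c) / h) * ((x i - c) / h) ^ (p + k)) •
    rvec p ((x i - c) / h)

/-- One-sided estimate `μ̂^{(p+1)}` of the `(p+1)`-th derivative at the cutoff, from an
order-`(p+1)` local polynomial fit with bandwidth `b`. -/
def muDerivHatTop (K : ℝ → ℝ) (p : ℕ) {n : ℕ} (c b : ℝ) (x y : Fin n → ℝ) : ℝ :=
  ((p + 1).factorial : ℝ) * b ^ (-((p : ℤ) + 1)) *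
    (evec (p + 1) (p + 1) ⬝ᵥ thetaHat K (p + 1) c b x y)

/-- Plug-in bias estimator `B̂(b)` built from the order-`(p+1)` local polynomial fits. -/
def Bhat (K : ℝ → ℝ) (p ν : ℕ) {n : ℕ} (c h b : ℝ) (x y : Fin n → ℝ) : ℝ :=
  ((ν.factorial : ℝ) / ((p + 1).factorial : ℝ)) *
    ((evec p ν ⬝ᵥ ((Gmat (Kp K) p c h x)⁻¹ *ᵥ LamVec (Kp K) p 1 c h x)) *
        muDerivHatTop (Kp K) p c b x y
      - (evec p ν ⬝ᵥ ((Gmat (Km K) p c h x)⁻¹ *ᵥ LamVec (Km K) p 1 c h x)) *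
        muDerivHatTop (Km K) p c b x y)

/-- Robust bias corrected estimator `τ̂_{ν,BC}(h) = τ̂_ν(h) - h^{p+1-ν} B̂(b)`. -/
def tauHatBC (K : ℝ → ℝ) (p ν : ℕ) {n : ℕ} (c h b : ℝ) (x y : Fin n → ℝ) : ℝ :=
  tauHat K p ν c h x y - h ^ ((p : ℤ) + 1 - ν) * Bhat K p ν c h b x y

/-- One-sided RBC weight for observation `i`:
`e_ν'G_p⁻¹` applied to the `i`-th column of `h Ω_BC`. -/
def wBC (K : ℝ → ℝ) (p ν : ℕ) {n : ℕ} (c h b : ℝ) (x : Fin n → ℝ) (i : Fin n) : ℝ :=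
  K ((x i - c) / h) * (evec p ν ⬝ᵥ ((Gmat K p c h x)⁻¹ *ᵥ rvec p ((x i - c) / h)))
    - (h / b) ^ (p + 2) * K ((x i - c) / b) *
        (evec p ν ⬝ᵥ ((Gmat K p c h x)⁻¹ *ᵥ LamVec K p 1 c h x)) *
        (evec (p + 1) (p + 1) ⬝ᵥ
          ((Gmat K (p + 1) c b x)⁻¹ *ᵥ rvec (p + 1) ((x i - c) / b)))

/-- Fixed-n HC0 plug-in variance estimator `V̂_BC(h)` for the RBC estimator, using
order-`(p+1)` local regression residuals at bandwidth `b`. -/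
def VhatBC (K : ℝ → ℝ) (p ν : ℕ) {n : ℕ} (c h b : ℝ) (x y : Fin n → ℝ) : ℝ :=
  ((n : ℝ) * h)⁻¹ * (ν.factorial : ℝ) ^ 2 *
    ∑ i, ((wBC (Kp K) p ν c h b x i) ^ 2 * (resid (Kp K) (p + 1) c b x y i) ^ 2
        + (wBC (Km K) p ν c h b x i) ^ 2 * (resid (Km K) (p + 1) c b x y i) ^ 2)

/-! ### Probabilistic setup -/

/-- Standard normal cumulative distribution function. -/
def Phi (z : ℝ) : ℝ := ((gaussianReal 0 1) (Set.Iic z)).toReal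

/-- Standard normal density. -/
def phiPDF (z : ℝ) : ℝ := gaussianPDFReal 0 1 z

/-- An i.i.d. sequence of sharp RD observations `(Xᵢ, Yᵢ(0), Yᵢ(1))`. -/
structure RDModel (Ω : Type) [MeasurableSpace Ω] (P : Measure Ω) where
  X : ℕ → Ω → ℝ
  Y0 : ℕ → Ω → ℝ
  Y1 : ℕ → Ω → ℝ
  meas : ∀ i, Measurable (X i) ∧ Measurable (Y0 i) ∧ Measurable (Y1 i)
  indep : iIndepFun (fun i ω => (X i ω, Y0 i ω, Y1 i ω)) P
  ident : ∀ i, IdentDistrib (fun ω => (X i ω, Y0 i ω, Y1 i ω))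
    (fun ω => (X 0 ω, Y0 0 ω, Y1 0 ω)) P P

/-- Observed outcome `Yᵢ = Yᵢ(0)(1 - Tᵢ) + Yᵢ(1)Tᵢ` with `Tᵢ = 1(Xᵢ ≥ c)`. -/
def Yobs {Ω : Type} (c : ℝ) (X Y0 Y1 : ℕ → Ω → ℝ) (i : ℕ) (ω : Ω) : ℝ :=
  if c ≤ X i ω then Y1 i ω else Y0 i ω

/-- Assumption RD, with smoothness index `S` and Hölder exponent `a`:
`f` is the Lebesgue density of `Xᵢ`, positive and continuous near the cutoff;
`μ₊(x) = E[Yᵢ(1)|Xᵢ=x]` and `μ₋(x) = E[Yᵢ(0)|Xᵢ=x]` are `S` times continuously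
differentiable with `a`-Hölder `S`-th derivatives; the conditional variances
`σ₊², σ₋²` are positive and continuous; and a conditional moment of order `δ > 8`
admits a continuous version. -/
structure AssumptionRD {Ω : Type} [MeasurableSpace Ω] (P : Measure Ω)
    (M : RDModel Ω P) (c xl xu : ℝ) (S : ℕ) (a : ℝ)
    (f μp μm σ2p σ2m : ℝ → ℝ) : Prop where
  h_xl : xl < c
  h_xu : c < xu
  h_a : a ∈ Set.Ioc (0 : ℝ) 1
  h_density : P.map (M.X 0)
    = (volume : Measure ℝ).withDensity (fun x => ENNReal.ofReal (f x))
  h_f_pos : ∀ x ∈ Set.Icc xl xu, 0 < f x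
  h_f_cont : ContinuousOn f (Set.Icc xl xu)
  h_condmean_p : ∀ i, (fun ω => μp (M.X i ω))
    =ᵐ[P] P[M.Y1 i | MeasurableSpace.comap (M.X i) (borel ℝ)]
  h_condmean_m : ∀ i, (fun ω => μm (M.X i ω))
    =ᵐ[P] P[M.Y0 i | MeasurableSpace.comap (M.X i) (borel ℝ)]
  h_smooth_p : ContDiffOn ℝ (S : ℕ∞) μp (Set.Icc xl xu)
  h_smooth_m : ContDiffOn ℝ (S : ℕ∞) μm (Set.Icc xl xu)
  h_holder_p : ∃ C : ℝ, ∀ x ∈ Set.Icc xl xu, ∀ y ∈ Set.Icc xl xu,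
    |iteratedDerivWithin S μp (Set.Icc xl xu) x
      - iteratedDerivWithin S μp (Set.Icc xl xu) y| ≤ C * |x - y| ^ a
  h_holder_m : ∃ C : ℝ, ∀ x ∈ Set.Icc xl xu, ∀ y ∈ Set.Icc xl xu,
    |iteratedDerivWithin S μm (Set.Icc xl xu) x
      - iteratedDerivWithin S μm (Set.Icc xl xu) y| ≤ C * |x - y| ^ a
  h_condvar_p : ∀ i, (fun ω => σ2p (M.X i ω))
    =ᵐ[P] P[fun ω => (M.Y1 i ω - μp (M.X i ω)) ^ 2
        | MeasurableSpace.comap (M.X i) (borel ℝ)]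
  h_condvar_m : ∀ i, (fun ω => σ2m (M.X i ω))
    =ᵐ[P] P[fun ω => (M.Y0 i ω - μm (M.X i ω)) ^ 2
        | MeasurableSpace.comap (M.X i) (borel ℝ)]
  h_var_pos_p : ∀ x ∈ Set.Icc xl xu, 0 < σ2p x
  h_var_pos_m : ∀ x ∈ Set.Icc xl xu, 0 < σ2m x
  h_var_cont_p : ContinuousOn σ2p (Set.Icc xl xu)
  h_var_cont_m : ContinuousOn σ2m (Set.Icc xl xu)
  h_moment : ∃ δ : ℝ, 8 < δ ∧ ∀ i, ∃ mp mm : ℝ → ℝ,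
    ContinuousOn mp (Set.Icc xl xu) ∧ ContinuousOn mm (Set.Icc xl xu) ∧
    ((fun ω => mp (M.X i ω)) =ᵐ[P]
      P[fun ω => |M.Y1 i ω| ^ δ | MeasurableSpace.comap (M.X i) (borel ℝ)]) ∧
    ((fun ω => mm (M.X i ω)) =ᵐ[P]
      P[fun ω => |M.Y0 i ω| ^ δ | MeasurableSpace.comap (M.X i) (borel ℝ)])

/-- The sharp RD target parameter `τ_ν = μ₊^{(ν)}(c) - μ₋^{(ν)}(c)`. -/
def tauParam (xl xu : ℝ) (μp μm : ℝ → ℝ) (ν : ℕ) (c : ℝ) : ℝ :=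
  iteratedDerivWithin ν μp (Set.Icc xl xu) c - iteratedDerivWithin ν μm (Set.Icc xl xu) c

/-- Coverage probability of the undersmoothed interval
`I_US(h) = [τ̂_ν(h) ± z √(V̂(h)/(n h^{1+2ν}))]` at sample size `n`. -/
def coverUS {Ω : Type} [MeasurableSpace Ω] (P : Measure Ω) (M : RDModel Ω P)
    (K : ℝ → ℝ) (p ν : ℕ) (c τ z : ℝ) (h : ℕ → ℝ) (n : ℕ) : ℝ :=
  (P {ω | |τ - tauHat K p ν c (h n) (fun i : Fin n => M.X i ω)
        (fun i : Fin n => Yobs c M.X M.Y0 M.Y1 i ω)| ≤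
      z * Real.sqrt (Vhat K p ν c (h n) (fun i : Fin n => M.X i ω)
          (fun i : Fin n => Yobs c M.X M.Y0 M.Y1 i ω)
        / ((n : ℝ) * (h n) ^ (1 + 2 * ν)))}).toReal

/-- Coverage probability of the robust bias corrected interval
`I_RBC(h) = [τ̂_{ν,BC}(h) ± z √(V̂_BC(h)/(n h^{1+2ν}))]` at sample size `n`. -/
def coverRBC {Ω : Type} [MeasurableSpace Ω] (P : Measure Ω) (M : RDModel Ω P)
    (K : ℝ → ℝ) (p ν : ℕ) (c τ z : ℝ) (h b : ℕ → ℝ) (n : ℕ) : ℝ :=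
  (P {ω | |τ - tauHatBC K p ν c (h n) (b n) (fun i : Fin n => M.X i ω)
        (fun i : Fin n => Yobs c M.X M.Y0 M.Y1 i ω)| ≤
      z * Real.sqrt (VhatBC K p ν c (h n) (b n) (fun i : Fin n => M.X i ω)
          (fun i : Fin n => Yobs c M.X M.Y0 M.Y1 i ω)
        / ((n : ℝ) * (h n) ^ (1 + 2 * ν)))}).toReal

/-- Fixed-n expectation of the kernel-weighted design matrix:
`G̃ᵢⱼ = E[h⁻¹ K(X_{h}) X_h^{i+j}]`. -/
def Gtil {Ω : Type} [MeasurableSpace Ω] (P : Measure Ω) (M : RDModel Ω P)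
    (K : ℝ → ℝ) (p : ℕ) (c h : ℝ) : Matrix (Fin (p + 1)) (Fin (p + 1)) ℝ :=
  fun i j => ∫ x, h⁻¹ * K ((x - c) / h) * ((x - c) / h) ^ ((i : ℕ) + (j : ℕ))
    ∂(P.map (M.X 0))

/-- Fixed-n expectation of the kernel-weighted moment vector:
`Λ̃_{p,k}(j) = E[h⁻¹ K(X_h) X_h^{j + p + k}]`. -/
def LamTil {Ω : Type} [MeasurableSpace Ω] (P : Measure Ω) (M : RDModel Ω P)
    (K : ℝ → ℝ) (p k : ℕ) (c h : ℝ) : Fin (p + 1) → ℝ :=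
  fun j => ∫ x, h⁻¹ * K ((x - c) / h) * ((x - c) / h) ^ ((j : ℕ) + p + k)
    ∂(P.map (M.X 0))

/-- A sequence of bounded (in `n`) real constants. -/
def BddSeq (Q : ℕ → ℝ) : Prop := ∃ C : ℝ, ∀ n, |Q n| ≤ C

/-- A family `Q n z` of polynomials in `z` of degree at most `d` with coefficients
bounded uniformly in `n`. -/
def PolyBdd (d : ℕ) (Q : ℕ → ℝ → ℝ) : Prop :=
  ∃ coef : ℕ → Fin (d + 1) → ℝ, (∃ C : ℝ, ∀ n j, |coef n j| ≤ C) ∧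
    ∀ n z, Q n z = ∑ j, coef n j * z ^ (j : ℕ)

end RD

open MeasureTheory ProbabilityTheory Filter Asymptotics Matrix Topology RD

/-! With `h ≍ n^{-1/(p+2)}`, each leading term `(nh)⁻¹`, `n h^{3+2p}`, `h^{1+p}` of the coverage
error expansion is of order `n^{-(p+1)/(p+2)}` and the remainders are of no larger order; the same
bandwidth satisfies the rate conditions of the Edgeworth expansion, because `nh` grows polynomially
while `n h^{p+2}` stays bounded. For `h = H n^{-1/(p+2)}` the leading terms equal
`n^{-(p+1)/(p+2)} (H⁻¹Q₁ + H^{3+2p}Q₂ + H^{1+p}Q₃)`; when `Q₁, Q₂ ≠ 0` the absolute value of the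
bracket tends to infinity at `0⁺` and at `∞`, so it attains its minimum on `(0, ∞)`. -/

section

open Real

lemma tendsto_div_log_rpow_atTop (s : ℝ) :
    Tendsto (fun x : ℝ => x / log x ^ s) atTop atTop := by
  have h : Tendsto (fun x : ℝ => log x ^ s / x) atTop (𝓝[>] 0) := by
    refine tendsto_nhdsWithin_iff.2 ⟨?_, ?_⟩
    · simpa using (isLittleO_log_rpow_rpow_atTop s one_pos).tendsto_div_nhds_zero
    · filter_upwards [eventually_gt_atTop 1] with x hx
      exact div_pos (rpow_pos_of_pos (log_pos hx) s) (by linarith)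
  exact h.inv_tendsto_nhdsGT_zero.congr fun x => inv_div _ _

lemma tendsto_log_rpow_div_sqrt_atTop (s : ℝ) :
    Tendsto (fun x : ℝ => log x ^ s / √x) atTop (𝓝 0) :=
  (isLittleO_log_rpow_rpow_atTop s one_half_pos).tendsto_div_nhds_zero.congr fun x => by
    rw [sqrt_eq_rpow]

lemma isTheta_of_mul_le_of_le_mul {α : Type*} {l : Filter α} {f r : α → ℝ} {c₁ c₂ : ℝ}
    (hc₁ : 0 < c₁) (hr : ∀ᶠ x in l, 0 ≤ r x)
    (h : ∀ᶠ x in l, c₁ * r x ≤ f x ∧ f x ≤ c₂ * r x) : f =Θ[l] r := by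
  refine ⟨.of_bound c₂ ?_, .of_bound c₁⁻¹ ?_⟩ <;> filter_upwards [hr, h] with x hrx ⟨hlo, hhi⟩ <;>
    rw [norm_of_nonneg hrx, norm_of_nonneg ((mul_nonneg hc₁.le hrx).trans hlo)]
  exacts [hhi, (le_inv_mul_iff₀ hc₁).2 hlo]


lemma add_neg_one_div_mul_le_iff {p : ℕ} {k s F : ℝ} :
    k + -1 / (p + 2) * s ≤ F / (p + 2) ↔ (p + 2) * k - s ≤ F := by
  have hp : (0 : ℝ) < p + 2 := by positivity
  rw [show k + -1 / (p + 2) * s = ((p + 2) * k - s) / (p + 2) by field_simp; ring,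
    div_le_div_iff_of_pos_right hp]

lemma neg_one_lt_neg_one_div_natCast_add_two (p : ℕ) : -1 < -1 / ((p : ℝ) + 2) := by
  rw [lt_div_iff₀ (by positivity)]
  linarith

lemma tendsto_abs_mul_atTop {α : Type*} {l : Filter α} {u v : α → ℝ} {c : ℝ}
    (hu : Tendsto u l atTop) (hv : Tendsto v l (𝓝 c)) (hc : c ≠ 0) :
    Tendsto (fun x => |u x * v x|) l atTop := by
  simp_rw [abs_mul]
  exact (tendsto_abs_atTop_atTop.comp hu).atTop_mul_pos (abs_pos.2 hc) hv.abs

lemma exists_isMinOn_Ioi_of_tendsto {f : ℝ → ℝ} (hf : ContinuousOn f (Set.Ioi 0))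
    (h₀ : Tendsto f (𝓝[>] 0) atTop) (h_top : Tendsto f atTop atTop) :
    ∃ x, 0 < x ∧ IsMinOn f (Set.Ioi 0) x := by
  have hfexp : Tendsto (f ∘ exp) (cocompact ℝ) atTop := by
    rw [cocompact_eq_atBot_atTop, tendsto_sup]
    exact ⟨h₀.comp tendsto_exp_atBot_nhdsGT, h_top.comp tendsto_exp_atTop⟩
  obtain ⟨x, hx⟩ := (hf.comp_continuous continuous_exp exp_pos).exists_forall_le hfexp
  refine ⟨exp x, exp_pos x, fun y (hy : 0 < y) => ?_⟩
  simpa [exp_log hy] using hx (log y)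

def HasCoverageErrorExpansion (p : ℕ) (a Q₁ Q₂ Q₃ : ℝ) (g CE : ℕ → ℝ) : Prop :=
  ∃ e₁ e₂ : ℕ → ℝ,
    (e₁ =o[atTop] fun n : ℕ => ((n : ℝ) * g n)⁻¹) ∧
    (e₂ =O[atTop] fun n : ℕ =>
      (n : ℝ) * g n ^ ((3 : ℝ) + 2 * p + 2 * a) + g n ^ ((1 : ℝ) + p + a)) ∧
    ∀ n : ℕ, CE n = ((n : ℝ) * g n)⁻¹ * Q₁ + (n : ℝ) * g n ^ (3 + 2 * p) * Q₂
      + g n ^ (1 + p) * Q₃ + e₁ n + e₂ n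

variable {g : ℕ → ℝ}

lemma isBigO_natCast_rpow_mul_rpow_of_isTheta {e : ℝ} (hg : g =Θ[atTop] fun n => (n : ℝ) ^ e)
    (hg₀ : ∀ᶠ n in atTop, 0 ≤ g n) {k s F : ℝ} (h : k + e * s ≤ F) :
    (fun n : ℕ => (n : ℝ) ^ k * g n ^ s) =O[atTop] fun n => (n : ℝ) ^ F := by
  have hgs : (fun n => g n ^ s) =O[atTop] fun n : ℕ => (n : ℝ) ^ (e * s) :=
    (hg.rpow hg₀ (.of_forall fun n => by positivity)).isBigO.congr_right fun n =>
      (rpow_mul n.cast_nonneg e s).symm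
  exact IsBigO.mul_atTop_rpow_natCast_of_isBigO_rpow k (e * s) F (isBigO_refl _ _) hgs h

lemma tendsto_natCast_mul_atTop_of_isTheta {e : ℝ} (hg : g =Θ[atTop] fun n => (n : ℝ) ^ e)
    (hg₀ : ∀ᶠ n in atTop, 0 ≤ g n) (he : -1 < e) :
    Tendsto (fun n : ℕ => (n : ℝ) * g n) atTop atTop := by
  have hlow : (fun n : ℕ => (n : ℝ) ^ (1 + e)) =O[atTop] fun n => (n : ℝ) * g n :=
    ((isBigO_refl (fun n : ℕ => (n : ℝ)) atTop).mul hg.symm.isBigO).congr_left fun n =>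
      (rpow_one_add' n.cast_nonneg (by linarith)).symm
  have hnorm := hlow.trans_tendsto_norm_atTop <|
    ((tendsto_rpow_atTop (by linarith : 0 < 1 + e)).comp tendsto_natCast_atTop_atTop).congr fun n =>
      (norm_of_nonneg (by positivity)).symm
  refine hnorm.congr' ?_
  filter_upwards [hg₀] with n hn
  exact norm_of_nonneg (by positivity)


lemma tendsto_natCast_mul_div_log_rpow_of_isTheta {p : ℕ}
    (hg : g =Θ[atTop] fun n => (n : ℝ) ^ (-(1 : ℝ) / (p + 2)))
    (hg₀ : ∀ᶠ n in atTop, 0 ≤ g n) (s : ℝ) :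
    Tendsto (fun n : ℕ => (n : ℝ) * g n / log ((n : ℝ) * g n) ^ s) atTop atTop :=
  (tendsto_div_log_rpow_atTop s).comp <|
    tendsto_natCast_mul_atTop_of_isTheta hg hg₀ (neg_one_lt_neg_one_div_natCast_add_two p)

lemma tendsto_sqrt_mul_pow_mul_log_rpow_of_isTheta {p : ℕ}
    (hg : g =Θ[atTop] fun n => (n : ℝ) ^ (-(1 : ℝ) / (p + 2)))
    (hg₀ : ∀ᶠ n in atTop, 0 ≤ g n) (s : ℝ) :
    Tendsto (fun n : ℕ => √((n : ℝ) * g n) * g n ^ (p + 1) * log ((n : ℝ) * g n) ^ s)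
      atTop (𝓝 0) := by
  have ht := tendsto_natCast_mul_atTop_of_isTheta hg hg₀
    (neg_one_lt_neg_one_div_natCast_add_two p)
  have hbdd : (fun n : ℕ => (n : ℝ) * g n ^ (p + 2)) =O[atTop] fun _ => (1 : ℝ) := by
    have := isBigO_natCast_rpow_mul_rpow_of_isTheta hg hg₀ (k := 1) (s := ((p + 2 : ℕ) : ℝ))
      (F := 0) (by rw [← zero_div ((p : ℝ) + 2), add_neg_one_div_mul_le_iff]; push_cast; linarith)
    simpa only [rpow_one, rpow_natCast, rpow_zero] using this
  refine IsBigO.trans_tendsto ?_ ((tendsto_log_rpow_div_sqrt_atTop s).comp ht)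
  refine ((hbdd.mul (isBigO_refl _ _)).congr' ?_ (.of_forall fun n => one_mul _))
  filter_upwards [ht.eventually_gt_atTop 0] with n hn
  have hsq : (n : ℝ) * g n ^ (p + 2) = √((n : ℝ) * g n) * √((n : ℝ) * g n) * g n ^ (p + 1) := by
    rw [mul_self_sqrt hn.le]; ring
  have hsqrt : √((n : ℝ) * g n) ≠ 0 := (sqrt_pos.2 hn).ne'
  simp only [Function.comp_apply, hsq]
  field_simp


theorem HasCoverageErrorExpansion.isBigO {p : ℕ} {a Q₁ Q₂ Q₃ : ℝ} {CE : ℕ → ℝ}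
    (h : HasCoverageErrorExpansion p a Q₁ Q₂ Q₃ g CE) (ha : 0 ≤ a)
    (hg : g =Θ[atTop] fun n => (n : ℝ) ^ (-(1 : ℝ) / (p + 2)))
    (hg₀ : ∀ᶠ n in atTop, 0 ≤ g n) :
    CE =O[atTop] fun n : ℕ => (n : ℝ) ^ (-((p : ℝ) + 1) / (p + 2)) := by
  obtain ⟨e₁, e₂, he₁, he₂, hCE⟩ := h
  set F : ℕ → ℝ := fun n => (n : ℝ) ^ (-((p : ℝ) + 1) / (p + 2))
  have key : ∀ k s : ℝ, (p + 2) * k - s ≤ -(p + 1) →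
      (fun n : ℕ => (n : ℝ) ^ k * g n ^ s) =O[atTop] F := fun k s h =>
    isBigO_natCast_rpow_mul_rpow_of_isTheta hg hg₀ (add_neg_one_div_mul_le_iff.2 h)
  have mul_const : ∀ {u : ℕ → ℝ} (Q : ℝ), u =O[atTop] F → (fun n => u n * Q) =O[atTop] F :=
    fun Q h => (h.const_mul_left Q).congr_left fun _ => mul_comm _ _
  have h₁ : (fun n : ℕ => ((n : ℝ) * g n)⁻¹) =O[atTop] F :=
    (key (-1) (-1) (by linarith)).congr_left fun n => by
      rw [rpow_neg_one, rpow_neg_one, mul_inv]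
  have h₂ : (fun n : ℕ => (n : ℝ) * g n ^ (3 + 2 * p)) =O[atTop] F :=
    (key 1 ((3 + 2 * p : ℕ) : ℝ) (by push_cast; linarith)).congr_left fun n => by
      rw [rpow_one, rpow_natCast]
  have h₃ : (fun n : ℕ => g n ^ (1 + p)) =O[atTop] F :=
    (key 0 ((1 + p : ℕ) : ℝ) (by push_cast; linarith)).congr_left fun n => by
      rw [rpow_zero, one_mul, rpow_natCast]
  have h₅ : e₂ =O[atTop] F := he₂.trans <|
    ((key 1 (3 + 2 * p + 2 * a) (by linarith)).add
      (key 0 (1 + p + a) (by linarith))).congr_left fun n => by rw [rpow_one, rpow_zero, one_mul]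
  refine .congr_left ?_ fun n => (hCE n).symm
  exact ((((mul_const Q₁ h₁).add (mul_const Q₂ h₂)).add (mul_const Q₃ h₃)).add
    (he₁.isBigO.trans h₁)).add h₅

theorem isBigO_of_forall_hasCoverageErrorExpansion {p : ℕ} {a γ Q₁ Q₂ Q₃ c₁ c₂ : ℝ}
    {CE : (ℕ → ℝ) → ℕ → ℝ} (ha : 0 ≤ a)
    (hexp : ∀ g : ℕ → ℝ, (∀ n, 0 < g n) →
      Tendsto (fun n : ℕ => (n : ℝ) * g n / log ((n : ℝ) * g n) ^ ((2 : ℝ) + γ)) atTop atTop →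
      Tendsto (fun n : ℕ => √((n : ℝ) * g n) * g n ^ (p + 1) * log ((n : ℝ) * g n) ^ ((1 : ℝ) + γ))
        atTop (𝓝 0) →
      HasCoverageErrorExpansion p a Q₁ Q₂ Q₃ g (CE g))
    (hg : ∀ n, 0 < g n) (hc₁ : 0 < c₁)
    (hbd : ∀ n : ℕ, 0 < n →
      c₁ * (n : ℝ) ^ (-(1 : ℝ) / (p + 2)) ≤ g n ∧ g n ≤ c₂ * (n : ℝ) ^ (-(1 : ℝ) / (p + 2))) :
    CE g =O[atTop] fun n : ℕ => (n : ℝ) ^ (-((p : ℝ) + 1) / (p + 2)) := by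
  have hg₀ : ∀ᶠ n in atTop, 0 ≤ g n := .of_forall fun n => (hg n).le
  have hΘ := isTheta_of_mul_le_of_le_mul hc₁ (.of_forall fun n => by positivity)
    ((eventually_gt_atTop 0).mono hbd)
  exact (hexp g hg (tendsto_natCast_mul_div_log_rpow_of_isTheta hΘ hg₀ _)
    (tendsto_sqrt_mul_pow_mul_log_rpow_of_isTheta hΘ hg₀ _)).isBigO ha hΘ hg₀

lemma exists_isMinOn_coverage_error_objective (p : ℕ) {Q₁ Q₂ : ℝ} (hQ₁ : Q₁ ≠ 0) (hQ₂ : Q₂ ≠ 0)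
    (Q₃ : ℝ) : ∃ H, 0 < H ∧ IsMinOn (fun H : ℝ =>
      |H⁻¹ * Q₁ + H ^ (3 + 2 * p) * Q₂ + H ^ (1 + p) * Q₃|) (Set.Ioi 0) H := by
  refine exists_isMinOn_Ioi_of_tendsto ?_ ?_ ?_
  · exact fun H (hH : 0 < H) => by fun_prop (disch := exact hH.ne')
  · have hv : Tendsto (fun H : ℝ => Q₁ + H ^ (4 + 2 * p) * Q₂ + H ^ (2 + p) * Q₃)
        (𝓝[>] 0) (𝓝 Q₁) := by
      simpa using ((by fun_prop : Continuous fun H : ℝ =>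
        Q₁ + H ^ (4 + 2 * p) * Q₂ + H ^ (2 + p) * Q₃).tendsto 0).mono_left nhdsWithin_le_nhds
    refine (tendsto_abs_mul_atTop tendsto_inv_nhdsGT_zero hv hQ₁).congr' ?_
    filter_upwards [self_mem_nhdsWithin] with H (hH : 0 < H)
    congr 1
    field_simp
    ring
  · have hv : Tendsto (fun H : ℝ => Q₂ + H⁻¹ ^ (2 + p) * Q₃ + H⁻¹ ^ (4 + 2 * p) * Q₁)
        atTop (𝓝 Q₂) := by
      simpa using ((tendsto_inv_atTop_zero.pow (2 + p)).mul_const Q₃).const_add Q₂ |>.add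
        ((tendsto_inv_atTop_zero.pow (4 + 2 * p)).mul_const Q₁)
    refine (tendsto_abs_mul_atTop (tendsto_pow_atTop (n := 3 + 2 * p) (by omega)) hv hQ₂).congr' ?_
    filter_upwards [eventually_gt_atTop 0] with H hH
    congr 1
    simp only [inv_pow]
    field_simp
    ring

end

theorem optimal_undersmoothing_general
    {Ω : Type} [MeasurableSpace Ω] (P : Measure Ω)
    (M : RDModel Ω P) (c xl xu a : ℝ) (S p ν : ℕ)
    (f μp μm σ2p σ2m : ℝ → ℝ)
    (hRD : AssumptionRD P M c xl xu S a f μp μm σ2p σ2m)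
    (K : ℝ → ℝ)
    (α z : ℝ)
    (γ : ℝ)
    (Q1 Q2 Q3 : ℝ)
    -- the coverage error expansion for `I_US`, with constants `Q1, Q2, Q3`, holds along
    -- every bandwidth sequence satisfying the conditions of the Edgeworth expansion:
    (hexp : ∀ g : ℕ → ℝ, (∀ n, 0 < g n) →
      Tendsto (fun n : ℕ => (n : ℝ) * g n
        / Real.log ((n : ℝ) * g n) ^ ((2 : ℝ) + γ)) atTop atTop →
      Tendsto (fun n : ℕ => Real.sqrt ((n : ℝ) * g n) * g n ^ (p + 1)
        * Real.log ((n : ℝ) * g n) ^ ((1 : ℝ) + γ)) atTop (nhds 0) →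
      ∃ e1 e2 : ℕ → ℝ,
        (e1 =o[atTop] fun n : ℕ => ((n : ℝ) * g n)⁻¹) ∧
        (e2 =O[atTop] fun n : ℕ =>
          (n : ℝ) * g n ^ ((3 : ℝ) + 2 * p + 2 * a) + g n ^ ((1 : ℝ) + p + a)) ∧
        ∀ n : ℕ,
          coverUS P M K p ν c (tauParam xl xu μp μm ν c) z g n - (1 - α)
            = ((n : ℝ) * g n)⁻¹ * Q1 + (n : ℝ) * g n ^ (3 + 2 * p) * Q2
              + g n ^ (1 + p) * Q3 + e1 n + e2 n) :
    -- (i) the rate `n^{-(p+1)/(p+2)}` is attained by any bandwidth `h ≍ n^{-1/(p+2)}`: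
    (∀ g : ℕ → ℝ, (∀ n, 0 < g n) →
      (∃ c1 c2 : ℝ, 0 < c1 ∧ ∀ n : ℕ, 0 < n →
        c1 * (n : ℝ) ^ (-(1 : ℝ) / (p + 2)) ≤ g n ∧
          g n ≤ c2 * (n : ℝ) ^ (-(1 : ℝ) / (p + 2))) →
      (fun n : ℕ => coverUS P M K p ν c (tauParam xl xu μp μm ν c) z g n - (1 - α))
        =O[atTop] fun n : ℕ => (n : ℝ) ^ (-((p : ℝ) + 1) / (p + 2))) ∧
    -- (ii) if `Q1, Q2, Q3 ≠ 0`, the CE-optimal bandwidth is `H_US n^{-1/(p+2)}`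
    -- with `H_US` the minimizer of the coverage error objective:
    (Q1 ≠ 0 → Q2 ≠ 0 → Q3 ≠ 0 →
      ∃ HUS : ℝ, 0 < HUS ∧
        IsMinOn (fun H : ℝ =>
          |H⁻¹ * Q1 + H ^ (3 + 2 * p) * Q2 + H ^ (1 + p) * Q3|) (Set.Ioi 0) HUS ∧
        (fun n : ℕ => coverUS P M K p ν c (tauParam xl xu μp μm ν c) z
            (fun m : ℕ => HUS * (m : ℝ) ^ (-(1 : ℝ) / (p + 2))) n - (1 - α))
          =O[atTop] fun n : ℕ => (n : ℝ) ^ (-((p : ℝ) + 1) / (p + 2))) := by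
  have ha : 0 ≤ a := hRD.h_a.1.le
  refine ⟨fun g hg ⟨c1, c2, hc1, hbd⟩ =>
    isBigO_of_forall_hasCoverageErrorExpansion ha hexp hg hc1 hbd, fun hQ₁ hQ₂ _ => ?_⟩
  obtain ⟨HUS, hHUS, hmin⟩ := exists_isMinOn_coverage_error_objective p hQ₁ hQ₂ Q3
  refine ⟨HUS, hHUS, hmin, ?_⟩
  -- `0 ^ e = 0` makes `HUS * n ^ e` vanish at `n = 0`; use a positive bandwidth agreeing with it
  -- for `n ≥ 1`
  set g : ℕ → ℝ := fun n => HUS * ((max n 1 : ℕ) : ℝ) ^ (-(1 : ℝ) / (p + 2))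
  refine (isBigO_of_forall_hasCoverageErrorExpansion ha hexp (g := g) (fun n => by positivity)
    hHUS (c₂ := HUS) fun n hn => ?_).congr' ?_ .rfl
  · simp only [g, max_eq_left (b := 1) hn, le_refl, and_self]
  · filter_upwards [eventually_ge_atTop 1] with n hn
    simp only [coverUS, g, max_eq_left hn]

/-- Optimal undersmoothing: under the conditions of the Edgeworth
expansion for `T_US`, with constants `Q1, Q2, Q3` for which the coverage error expansion
of `I_US` holds along admissible bandwidth sequences, the coverage error
`P[τ_ν ∈ I_US(h)] = (1-α) + O(n^{-(p+1)/(p+2)})` is attained by any `h ≍ n^{-1/(p+2)}`;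
moreover if `Q1, Q2, Q3 ≠ 0` the CE-optimal bandwidth is `h_US = H_US n^{-1/(p+2)}` with
`H_US = argmin_{H>0} |H⁻¹Q1 + H^{3+2p}Q2 + H^{1+p}Q3|`. -/
theorem optimal_undersmoothing
    {Ω : Type} [MeasurableSpace Ω] (P : Measure Ω) [IsProbabilityMeasure P]
    (M : RDModel Ω P) (c xl xu a : ℝ) (S p ν : ℕ) (hνp : ν ≤ p) (hS : p + 1 ≤ S)
    (f μp μm σ2p σ2m : ℝ → ℝ)
    (hRD : AssumptionRD P M c xl xu S a f μp μm σ2p σ2m)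
    (K : ℝ → ℝ) (hK : IsRDKernel p K)
    (α z : ℝ) (hα : α ∈ Set.Ioo (0 : ℝ) 1) (hz : Phi z = 1 - α / 2)
    (γ : ℝ) (hγ : 0 < γ)
    (Q1 Q2 Q3 : ℝ)
    -- the coverage error expansion for `I_US`, with constants `Q1, Q2, Q3`, holds along
    -- every bandwidth sequence satisfying the conditions of the Edgeworth expansion:
    (hexp : ∀ g : ℕ → ℝ, (∀ n, 0 < g n) →
      Tendsto (fun n : ℕ => (n : ℝ) * g n
        / Real.log ((n : ℝ) * g n) ^ ((2 : ℝ) + γ)) atTop atTop →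
      Tendsto (fun n : ℕ => Real.sqrt ((n : ℝ) * g n) * g n ^ (p + 1)
        * Real.log ((n : ℝ) * g n) ^ ((1 : ℝ) + γ)) atTop (nhds 0) →
      ∃ e1 e2 : ℕ → ℝ,
        (e1 =o[atTop] fun n : ℕ => ((n : ℝ) * g n)⁻¹) ∧
        (e2 =O[atTop] fun n : ℕ =>
          (n : ℝ) * g n ^ ((3 : ℝ) + 2 * p + 2 * a) + g n ^ ((1 : ℝ) + p + a)) ∧
        ∀ n : ℕ,
          coverUS P M K p ν c (tauParam xl xu μp μm ν c) z g n - (1 - α)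
            = ((n : ℝ) * g n)⁻¹ * Q1 + (n : ℝ) * g n ^ (3 + 2 * p) * Q2
              + g n ^ (1 + p) * Q3 + e1 n + e2 n) :
    -- (i) the rate `n^{-(p+1)/(p+2)}` is attained by any bandwidth `h ≍ n^{-1/(p+2)}`:
    (∀ g : ℕ → ℝ, (∀ n, 0 < g n) →
      (∃ c1 c2 : ℝ, 0 < c1 ∧ ∀ n : ℕ, 0 < n →
        c1 * (n : ℝ) ^ (-(1 : ℝ) / (p + 2)) ≤ g n ∧
          g n ≤ c2 * (n : ℝ) ^ (-(1 : ℝ) / (p + 2))) →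
      (fun n : ℕ => coverUS P M K p ν c (tauParam xl xu μp μm ν c) z g n - (1 - α))
        =O[atTop] fun n : ℕ => (n : ℝ) ^ (-((p : ℝ) + 1) / (p + 2))) ∧
    -- (ii) if `Q1, Q2, Q3 ≠ 0`, the CE-optimal bandwidth is `H_US n^{-1/(p+2)}`
    -- with `H_US` the minimizer of the coverage error objective:
    (Q1 ≠ 0 → Q2 ≠ 0 → Q3 ≠ 0 →
      ∃ HUS : ℝ, 0 < HUS ∧
        IsMinOn (fun H : ℝ =>
          |H⁻¹ * Q1 + H ^ (3 + 2 * p) * Q2 + H ^ (1 + p) * Q3|) (Set.Ioi 0) HUS ∧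
        (fun n : ℕ => coverUS P M K p ν c (tauParam xl xu μp μm ν c) z
            (fun m : ℕ => HUS * (m : ℝ) ^ (-(1 : ℝ) / (p + 2))) n - (1 - α))
          =O[atTop] fun n : ℕ => (n : ℝ) ^ (-((p : ℝ) + 1) / (p + 2))) :=
  optimal_undersmoothing_general P M c xl xu a S p ν f μp μm σ2p σ2m hRD K α z γ Q1 Q2 Q3 hexp
end
end

section
/- Under the conditions of the coverage error expansion for I_RBC with S ≥ p+2 (Assumptions RD and K, ρ = h/b bounded and bounded away from zero), if the bandwidth is chosen at the undersmoothing-optimal rate h ≍ n^{-1/(2+p)}, then the robust bias corrected interval has coverage error P[τ_ν ∈ I_RBC(h)] − (1−α) = O(n^{-(1+p)/(2+p)}); if in addition |Q_{RBC,1}| is bounded away from zero along the sequence, the coverage error is of exact order n^{-(1+p)/(2+p)}, i.e., the same rate as the best undersmoothed interval, and strictly slower than the RBC-optimal rate n^{-(2+p)/(3+p)}. -/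
/-!
Shared setup for "Optimal Bandwidth Choice for Robust Bias Corrected Inference
in Regression Discontinuity Designs" (Calonico, Cattaneo, Farrell).
-/

noncomputable section

open MeasureTheory ProbabilityTheory Filter Asymptotics Matrix Topology

open MeasureTheory ProbabilityTheory Filter Asymptotics Matrix Topology RD

/-!
With `h ≍ n^{-1/(2+p)}` every term of the coverage error expansion is a power of `h`:
`n ≍ h^{-(2+p)}`, so `(nh)⁻¹ ≍ h^{1+p} ≍ n^{-(1+p)/(2+p)}`, while `n h^{5+2p} ≍ h^{3+p}`,
`h^{2+p}`, `n h^{5+2p+2a} ≍ h^{3+p+2a}` and `h^{2+p+a}` are all `o(h^{1+p})` because `h → 0`.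
Hence the first term `(nh)⁻¹ Q_{RBC,1}` dominates, and it is of exact order
`n^{-(1+p)/(2+p)}` as soon as `|Q_{RBC,1}|` stays away from zero.
-/

namespace Asymptotics

variable {α : Type*} {l : Filter α}

theorem isTheta_of_mul_le_of_le_mul {f g : α → ℝ} {c₁ c₂ : ℝ} (hc₁ : 0 < c₁)
    (hg : ∀ᶠ x in l, 0 ≤ g x) (h₁ : ∀ᶠ x in l, c₁ * g x ≤ f x)
    (h₂ : ∀ᶠ x in l, f x ≤ c₂ * g x) : f =Θ[l] g := by
  refine ⟨.of_bound c₂ ?_, .of_bound c₁⁻¹ ?_⟩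
  · filter_upwards [hg, h₁, h₂] with x hgx h₁x h₂x
    rw [Real.norm_of_nonneg ((mul_nonneg hc₁.le hgx).trans h₁x), Real.norm_of_nonneg hgx]
    exact h₂x
  · filter_upwards [hg, h₁] with x hgx h₁x
    rw [Real.norm_of_nonneg hgx, Real.norm_of_nonneg ((mul_nonneg hc₁.le hgx).trans h₁x),
      le_inv_mul_iff₀ hc₁]
    exact h₁x

theorem rpow_isLittleO_rpow_of_tendsto_zero {f : α → ℝ} (hf : Tendsto f l (𝓝 0))
    (hpos : ∀ x, 0 < f x) {r s : ℝ} (hrs : r < s) :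
    (fun x => f x ^ s) =o[l] fun x => f x ^ r := by
  have hsmall : (fun x => f x ^ (s - r)) =o[l] fun _ => (1 : ℝ) := by
    rw [isLittleO_one_iff]
    simpa [Real.zero_rpow (sub_pos.2 hrs).ne'] using
      hf.rpow_const (Or.inr (sub_pos.2 hrs).le)
  refine (hsmall.mul_isBigO (isBigO_refl (fun x => f x ^ r) l)).congr
    (fun x => ?_) (fun x => ?_)
  · rw [← Real.rpow_add (hpos x), sub_add_cancel]
  · rw [one_mul]

theorem isTheta_mul_rpow_of_isTheta_rpow_neg {N h : α → ℝ} {d : ℝ}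
    (hN : N =Θ[l] fun x => h x ^ (-d)) (hpos : ∀ x, 0 < h x) (m : ℝ) :
    (fun x => N x * h x ^ m) =Θ[l] fun x => h x ^ (m - d) := by
  refine (hN.mul (isTheta_refl (fun x => h x ^ m) l)).trans_eventuallyEq
    (.of_eq (funext fun x => ?_))
  rw [← Real.rpow_add (hpos x), neg_add_eq_sub]

theorem IsTheta.rpow_of_isTheta_natCast_rpow {h : ℕ → ℝ} {e : ℝ}
    (hh : h =Θ[atTop] fun n => (n : ℝ) ^ e) (hnonneg : ∀ n, 0 ≤ h n) (r : ℝ) :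
    (fun n => h n ^ r) =Θ[atTop] fun n => (n : ℝ) ^ (e * r) := by
  refine (hh.rpow (.of_forall hnonneg) (.of_forall fun n => by positivity)).trans_eventuallyEq
    (.of_eq (funext fun n => ?_))
  rw [← Real.rpow_mul n.cast_nonneg]

theorem isBigO_mul_add {A Q R g : α → ℝ} (hA : A =O[l] g) (hQ : Q =O[l] fun _ => (1 : ℝ))
    (hR : R =o[l] g) : (fun x => A x * Q x + R x) =O[l] g := by
  have hAQ : (fun x => A x * Q x) =O[l] g := by simpa using hA.mul hQ
  exact hAQ.add hR.isBigO

theorem isBigO_mul_add_of_le_abs {A Q R g : α → ℝ} {q : ℝ} (hq : 0 < q) (hA : g =O[l] A)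
    (hQ : ∀ᶠ x in l, q ≤ |Q x|) (hR : R =o[l] g) :
    g =O[l] fun x => A x * Q x + R x := by
  have hAQ : A =O[l] fun x => A x * Q x := by
    refine .of_bound q⁻¹ ?_
    filter_upwards [hQ] with x hQx
    rw [Real.norm_eq_abs, Real.norm_eq_abs, abs_mul, le_inv_mul_iff₀ hq, mul_comm]
    exact mul_le_mul_of_nonneg_left hQx (abs_nonneg _)
  have hg : g =O[l] fun x => A x * Q x := hA.trans hAQ
  exact hg.trans (hR.trans_isBigO hg).right_isBigO_add'

theorem IsBigO.exists_pos_mul_le_abs {g E : α → ℝ} (h : g =O[l] E) :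
    ∃ c > 0, ∀ᶠ x in l, c * |g x| ≤ |E x| := by
  obtain ⟨C, hC, hgE⟩ := h.exists_pos
  refine ⟨C⁻¹, inv_pos.2 hC, ?_⟩
  filter_upwards [hgE.bound] with x hx
  rw [inv_mul_le_iff₀ hC]
  simpa only [Real.norm_eq_abs] using hx

end Asymptotics

namespace RD

theorem BddSeq.isBigO_one {Q : ℕ → ℝ} (hQ : BddSeq Q) {l : Filter ℕ} :
    Q =O[l] fun _ => (1 : ℝ) := by
  obtain ⟨C, hC⟩ := hQ
  exact .of_bound C (.of_forall fun n => by simpa using hC n)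

section UndersmoothingRate

variable {h : ℕ → ℝ} {p : ℕ}

theorem inv_natCast_mul_isTheta_rpow (hpos : ∀ n, 0 < h n)
    (hN : (fun n : ℕ => (n : ℝ)) =Θ[atTop] fun n => h n ^ (-((2 : ℝ) + p))) :
    (fun n : ℕ => ((n : ℝ) * h n)⁻¹) =Θ[atTop] fun n => h n ^ ((1 : ℝ) + p) := by
  have h1 := (isTheta_mul_rpow_of_isTheta_rpow_neg hN hpos 1).inv
  simp only [Real.rpow_one] at h1
  refine h1.trans_eventuallyEq (.of_eq (funext fun n => ?_))
  rw [← Real.rpow_neg (hpos n).le]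
  ring_nf

theorem natCast_mul_rpow_isLittleO (hpos : ∀ n, 0 < h n)
    (hN : (fun n : ℕ => (n : ℝ)) =Θ[atTop] fun n => h n ^ (-((2 : ℝ) + p)))
    (h0 : Tendsto h atTop (𝓝 0)) {m : ℝ} (hm : 3 + 2 * p < m) :
    (fun n : ℕ => (n : ℝ) * h n ^ m) =o[atTop] fun n => h n ^ ((1 : ℝ) + p) :=
  (isTheta_mul_rpow_of_isTheta_rpow_neg hN hpos m).trans_isLittleO
    (rpow_isLittleO_rpow_of_tendsto_zero h0 hpos (by linarith))

theorem coverage_remainder_isLittleO (hpos : ∀ n, 0 < h n)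
    (hN : (fun n : ℕ => (n : ℝ)) =Θ[atTop] fun n => h n ^ (-((2 : ℝ) + p)))
    (h0 : Tendsto h atTop (𝓝 0)) {Q2 Q3 e1 e2 : ℕ → ℝ} {a : ℝ} (ha : -1 < a)
    (hQ2 : BddSeq Q2) (hQ3 : BddSeq Q3) (he1 : e1 =o[atTop] fun n : ℕ => ((n : ℝ) * h n)⁻¹)
    (he2 : e2 =O[atTop] fun n : ℕ =>
      (n : ℝ) * h n ^ ((5 : ℝ) + 2 * p + 2 * a) + h n ^ ((2 : ℝ) + p + a)) :
    (fun n : ℕ => (n : ℝ) * h n ^ (5 + 2 * p) * Q2 n + h n ^ (2 + p) * Q3 n + e1 n + e2 n)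
      =o[atTop] fun n => h n ^ ((1 : ℝ) + p) := by
  have hsmall : ∀ {s : ℝ}, 1 + p < s →
      (fun n => h n ^ s) =o[atTop] fun n => h n ^ ((1 : ℝ) + p) :=
    fun hs => rpow_isLittleO_rpow_of_tendsto_zero h0 hpos hs
  have hQ2term : (fun n : ℕ => (n : ℝ) * h n ^ (5 + 2 * p) * Q2 n)
      =o[atTop] fun n => h n ^ ((1 : ℝ) + p) := by
    have := (natCast_mul_rpow_isLittleO hpos hN h0 (m := ((5 + 2 * p : ℕ) : ℝ))
      (by push_cast; linarith)).mul_isBigO hQ2.isBigO_one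
    simpa only [Real.rpow_natCast, mul_one] using this
  have hQ3term : (fun n : ℕ => h n ^ (2 + p) * Q3 n)
      =o[atTop] fun n => h n ^ ((1 : ℝ) + p) := by
    have := (hsmall (s := ((2 + p : ℕ) : ℝ)) (by push_cast; linarith)).mul_isBigO
      hQ3.isBigO_one
    simpa only [Real.rpow_natCast, mul_one] using this
  have he2' : e2 =o[atTop] fun n => h n ^ ((1 : ℝ) + p) :=
    he2.trans_isLittleO ((natCast_mul_rpow_isLittleO hpos hN h0 (by linarith)).add
      (hsmall (by linarith)))
  exact ((hQ2term.add hQ3term).add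
    (he1.trans_isBigO (inv_natCast_mul_isTheta_rpow hpos hN).isBigO)).add he2'

end UndersmoothingRate

end RD

theorem RBC_coverage_at_US_rate_general
    {Ω : Type} [MeasurableSpace Ω] (P : Measure Ω)
    (M : RDModel Ω P) (c xl xu a : ℝ) (S p ν : ℕ)
    (f μp μm σ2p σ2m : ℝ → ℝ)
    (hRD : AssumptionRD P M c xl xu S a f μp μm σ2p σ2m)
    (K : ℝ → ℝ)
    (α z : ℝ)
    (h b : ℕ → ℝ) (hhpos : ∀ n, 0 < h n)
    -- `h ≍ n^{-1/(2+p)}`, the undersmoothing-optimal rate: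
    (c1 c2 : ℝ) (hc1 : 0 < c1)
    (hUSrate : ∀ n : ℕ, 0 < n →
      c1 * (n : ℝ) ^ (-(1 : ℝ) / (2 + p)) ≤ h n ∧
        h n ≤ c2 * (n : ℝ) ^ (-(1 : ℝ) / (2 + p)))
    -- the coverage error expansion for `I_RBC`, with bounded constants `Q1, Q2, Q3`:
    (Q1 Q2 Q3 e1 e2 : ℕ → ℝ)
    (hQ1bd : BddSeq Q1) (hQ2bd : BddSeq Q2) (hQ3bd : BddSeq Q3)
    (he1 : e1 =o[atTop] fun n : ℕ => ((n : ℝ) * h n)⁻¹)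
    (he2 : e2 =O[atTop] fun n : ℕ =>
      (n : ℝ) * h n ^ ((5 : ℝ) + 2 * p + 2 * a) + h n ^ ((2 : ℝ) + p + a))
    (hexp : ∀ n : ℕ,
      coverRBC P M K p ν c (tauParam xl xu μp μm ν c) z h b n - (1 - α)
        = ((n : ℝ) * h n)⁻¹ * Q1 n + (n : ℝ) * h n ^ (5 + 2 * p) * Q2 n
          + h n ^ (2 + p) * Q3 n + e1 n + e2 n) :
    -- (i) coverage error `O(n^{-(1+p)/(2+p)})`:
    ((fun n : ℕ => coverRBC P M K p ν c (tauParam xl xu μp μm ν c) z h b n - (1 - α))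
      =O[atTop] fun n : ℕ => (n : ℝ) ^ (-((1 : ℝ) + p) / (2 + p))) ∧
    -- (ii) exact order when `|Q_RBC,1|` is bounded away from zero along the sequence:
    ((∃ q : ℝ, 0 < q ∧ ∀ᶠ n in atTop, q ≤ |Q1 n|) →
      ∃ c0 : ℝ, 0 < c0 ∧ ∀ᶠ n : ℕ in atTop,
        c0 * (n : ℝ) ^ (-((1 : ℝ) + p) / (2 + p)) ≤
          |coverRBC P M K p ν c (tauParam xl xu μp μm ν c) z h b n - (1 - α)|) ∧
    -- (iii) this rate is strictly slower than the RBC-optimal rate `n^{-(2+p)/(3+p)}`: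
    ((1 : ℝ) + p) / (2 + p) < ((2 : ℝ) + p) / (3 + p) := by
  have hu : h =Θ[atTop] fun n : ℕ => (n : ℝ) ^ (-(1 : ℝ) / (2 + p)) :=
    isTheta_of_mul_le_of_le_mul hc1 (.of_forall fun n => by positivity)
      ((eventually_gt_atTop 0).mono fun n hn => (hUSrate n hn).1)
      ((eventually_gt_atTop 0).mono fun n hn => (hUSrate n hn).2)
  have hpow := IsTheta.rpow_of_isTheta_natCast_rpow hu fun n => (hhpos n).le
  have hN : (fun n : ℕ => (n : ℝ)) =Θ[atTop] fun n => h n ^ (-((2 : ℝ) + p)) :=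
    ((hpow _).trans_eventuallyEq (.of_eq (funext fun n => by
      rw [show -(1 : ℝ) / (2 + p) * -(2 + p) = 1 by field_simp, Real.rpow_one]))).symm
  have hg : (fun n : ℕ => (n : ℝ) ^ (-((1 : ℝ) + p) / (2 + p)))
      =Θ[atTop] fun n => h n ^ ((1 : ℝ) + p) := by
    convert (hpow ((1 : ℝ) + p)).symm using 3; ring
  have h0 : Tendsto h atTop (𝓝 0) := hu.isBigO.trans_tendsto <| by
    simpa only [neg_div, Function.comp_def] using (tendsto_rpow_neg_atTop (by positivity)).comp
      tendsto_natCast_atTop_atTop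
  have hA := inv_natCast_mul_isTheta_rpow hhpos hN
  have hR := coverage_remainder_isLittleO hhpos hN h0 (by linarith [hRD.h_a.1])
    hQ2bd hQ3bd he1 he2
  have hE : (fun n => coverRBC P M K p ν c (tauParam xl xu μp μm ν c) z h b n - (1 - α))
      = fun n : ℕ => ((n : ℝ) * h n)⁻¹ * Q1 n + ((n : ℝ) * h n ^ (5 + 2 * p) * Q2 n
          + h n ^ (2 + p) * Q3 n + e1 n + e2 n) :=
    funext fun n => by rw [hexp]; ring
  refine ⟨?_, fun ⟨q, hq, hQ1⟩ => ?_, ?_⟩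
  · rw [hE]
    exact (isBigO_mul_add hA.isBigO hQ1bd.isBigO_one hR).trans hg.symm.isBigO
  · obtain ⟨c0, hc0, hle⟩ := (hg.isBigO.trans
      (hE ▸ isBigO_mul_add_of_le_abs hq hA.symm.isBigO hQ1 hR)).exists_pos_mul_le_abs
    exact ⟨c0, hc0, hle.mono fun n hn => by rwa [abs_of_nonneg (by positivity)] at hn⟩
  · rw [div_lt_div_iff₀ (by positivity) (by positivity)]
    nlinarith

/-- at the undersmoothing-optimal bandwidth rate `h ≍ n^{-1/(2+p)}`,
the RBC interval has coverage error `O(n^{-(1+p)/(2+p)})`; if moreover `|Q_RBC,1|` is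
bounded away from zero along the sequence, the coverage error is of exact order
`n^{-(1+p)/(2+p)}` — the same rate as the best undersmoothed interval — which is
strictly slower than the RBC-optimal rate `n^{-(2+p)/(3+p)}`. -/
theorem RBC_coverage_at_US_rate
    {Ω : Type} [MeasurableSpace Ω] (P : Measure Ω) [IsProbabilityMeasure P]
    (M : RDModel Ω P) (c xl xu a : ℝ) (S p ν : ℕ) (hνp : ν ≤ p) (hS : p + 2 ≤ S)
    (f μp μm σ2p σ2m : ℝ → ℝ)
    (hRD : AssumptionRD P M c xl xu S a f μp μm σ2p σ2m)
    (K : ℝ → ℝ) (hK : IsRDKernel p K)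
    (α z : ℝ) (hα : α ∈ Set.Ioo (0 : ℝ) 1) (hz : Phi z = 1 - α / 2)
    (h b : ℕ → ℝ) (hhpos : ∀ n, 0 < h n) (hbpos : ∀ n, 0 < b n)
    (hρ : ∃ r R : ℝ, 0 < r ∧ ∀ n, r ≤ h n / b n ∧ h n / b n ≤ R)
    -- `h ≍ n^{-1/(2+p)}`, the undersmoothing-optimal rate:
    (c1 c2 : ℝ) (hc1 : 0 < c1)
    (hUSrate : ∀ n : ℕ, 0 < n →
      c1 * (n : ℝ) ^ (-(1 : ℝ) / (2 + p)) ≤ h n ∧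
        h n ≤ c2 * (n : ℝ) ^ (-(1 : ℝ) / (2 + p)))
    -- the coverage error expansion for `I_RBC`, with bounded constants `Q1, Q2, Q3`:
    (Q1 Q2 Q3 e1 e2 : ℕ → ℝ)
    (hQ1bd : BddSeq Q1) (hQ2bd : BddSeq Q2) (hQ3bd : BddSeq Q3)
    (he1 : e1 =o[atTop] fun n : ℕ => ((n : ℝ) * h n)⁻¹)
    (he2 : e2 =O[atTop] fun n : ℕ =>
      (n : ℝ) * h n ^ ((5 : ℝ) + 2 * p + 2 * a) + h n ^ ((2 : ℝ) + p + a))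
    (hexp : ∀ n : ℕ,
      coverRBC P M K p ν c (tauParam xl xu μp μm ν c) z h b n - (1 - α)
        = ((n : ℝ) * h n)⁻¹ * Q1 n + (n : ℝ) * h n ^ (5 + 2 * p) * Q2 n
          + h n ^ (2 + p) * Q3 n + e1 n + e2 n) :
    -- (i) coverage error `O(n^{-(1+p)/(2+p)})`:
    ((fun n : ℕ => coverRBC P M K p ν c (tauParam xl xu μp μm ν c) z h b n - (1 - α))
      =O[atTop] fun n : ℕ => (n : ℝ) ^ (-((1 : ℝ) + p) / (2 + p))) ∧
    -- (ii) exact order when `|Q_RBC,1|` is bounded away from zero along the sequence: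
    ((∃ q : ℝ, 0 < q ∧ ∀ᶠ n in atTop, q ≤ |Q1 n|) →
      ∃ c0 : ℝ, 0 < c0 ∧ ∀ᶠ n : ℕ in atTop,
        c0 * (n : ℝ) ^ (-((1 : ℝ) + p) / (2 + p)) ≤
          |coverRBC P M K p ν c (tauParam xl xu μp μm ν c) z h b n - (1 - α)|) ∧
    -- (iii) this rate is strictly slower than the RBC-optimal rate `n^{-(2+p)/(3+p)}`:
    ((1 : ℝ) + p) / (2 + p) < ((2 : ℝ) + p) / (3 + p) :=
  RBC_coverage_at_US_rate_general P M c xl xu a S p ν f μp μm σ2p σ2m hRD K α z h b hhpos c1 c2 hc1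
    hUSrate Q1 Q2 Q3 e1 e2 hQ1bd hQ2bd hQ3bd he1 he2 hexp
end
end

section
/- (Rule-of-thumb bandwidth attains the CE-optimal rate.) Let ĥ_MSE be any data-driven bandwidth with ĥ_MSE / h_MSE →_P 1, where h_MSE = C n^{-1/(2p+3)} for some constant C > 0, and define ĥ^rot_RBC = n^{-p/((2p+3)(p+3))} · ĥ_MSE. Then ĥ^rot_RBC / (C n^{-1/(3+p)}) →_P 1, so that ĥ^rot_RBC is of the coverage-error optimal order n^{-1/(3+p)}; consequently, under the conditions under which the coverage error expansion for I_RBC holds along this bandwidth sequence (S ≥ p+2 and ρ bounded and bounded away from zero), the interval I_RBC(ĥ^rot_RBC) has coverage error of order n^{-(2+p)/(3+p)}. -/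
/-!
Shared setup for "Optimal Bandwidth Choice for Robust Bias Corrected Inference
in Regression Discontinuity Designs" (Calonico, Cattaneo, Farrell).
-/

noncomputable section

open MeasureTheory ProbabilityTheory Filter Asymptotics Matrix Topology

open MeasureTheory ProbabilityTheory Filter Asymptotics Matrix Topology RD

/-- Coverage probability of the RBC interval with a data-driven bandwidth `ĥ` and
auxiliary bandwidth `b = ĥ/ρ0`. -/
noncomputable def coverRBCrand {Ω : Type} [MeasurableSpace Ω] (P : Measure Ω)
    (M : RDModel Ω P) (K : ℝ → ℝ) (p ν : ℕ) (c τ z ρ0 : ℝ) (hhat : ℕ → Ω → ℝ)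
    (n : ℕ) : ℝ :=
  (P {ω | |τ - tauHatBC K p ν c (hhat n ω) (hhat n ω / ρ0)
        (fun i : Fin n => M.X i ω) (fun i : Fin n => Yobs c M.X M.Y0 M.Y1 i ω)| ≤
      z * Real.sqrt (VhatBC K p ν c (hhat n ω) (hhat n ω / ρ0)
          (fun i : Fin n => M.X i ω) (fun i : Fin n => Yobs c M.X M.Y0 M.Y1 i ω)
        / ((n : ℝ) * (hhat n ω) ^ (1 + 2 * ν)))}).toReal

/-!
The rule-of-thumb rescaling is exact: since `-p/((2p+3)(p+3)) - 1/(2p+3) = -1/(3+p)`, the ratio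
`ĥ^rot_RBC / (C n^{-1/(3+p)})` is literally `ĥ_MSE / h_MSE`. At `h = C n^{-1/(3+p)}` the three
leading terms `(nh)⁻¹`, `n h^{5+2p}` and `h^{2+p}` of the coverage error expansion are all of
exact order `n^{-(2+p)/(3+p)}`, and the remainders are no larger because `a ≥ 0`.
-/

namespace RD

theorem natCast_rpow_isBigO_natCast_rpow {e t : ℝ} (h : e ≤ t) :
    (fun n : ℕ => (n : ℝ) ^ e) =O[atTop] fun n : ℕ => (n : ℝ) ^ t := by
  refine IsBigO.of_bound 1 ?_
  filter_upwards [eventually_ge_atTop 1] with n hn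
  have h1 : (1 : ℝ) ≤ n := by exact_mod_cast hn
  rw [one_mul, Real.norm_of_nonneg (by positivity), Real.norm_of_nonneg (by positivity)]
  exact Real.rpow_le_rpow_of_exponent_le h1 h

theorem natCast_rpow_mul_bandwidth_rpow_isBigO {C b s r t : ℝ} (hC : 0 ≤ C)
    (h : s + b * r ≤ t) :
    (fun n : ℕ => (n : ℝ) ^ s * (C * (n : ℝ) ^ b) ^ r) =O[atTop]
      fun n : ℕ => (n : ℝ) ^ t := by
  have hpow : (fun n : ℕ => (n : ℝ) ^ s * (C * (n : ℝ) ^ b) ^ r) =ᶠ[atTop]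
      fun n : ℕ => C ^ r * (n : ℝ) ^ (s + b * r) := by
    filter_upwards [eventually_gt_atTop 0] with n hn
    have hn : (0 : ℝ) < n := by exact_mod_cast hn
    rw [Real.mul_rpow hC (by positivity), ← Real.rpow_mul hn.le, Real.rpow_add hn]
    ring
  exact hpow.trans_isBigO ((natCast_rpow_isBigO_natCast_rpow h).const_mul_left _)

theorem BddSeq.mul_isBigO {g k Q : ℕ → ℝ} (hQ : BddSeq Q) (hg : g =O[atTop] k) :
    (fun n => g n * Q n) =O[atTop] k := by
  obtain ⟨B, hB⟩ := hQ
  have hQ1 : Q =O[atTop] fun _ => (1 : ℝ) :=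
    IsBigO.of_bound B (Eventually.of_forall fun n => by simpa using hB n)
  simpa using hg.mul hQ1

theorem rot_exponent_add {p : ℝ} (hp : 0 ≤ p) :
    -p / ((2 * p + 3) * (p + 3)) + -1 / (2 * p + 3) = -1 / (3 + p) := by
  have h₁ : 2 * p + 3 ≠ 0 := by positivity
  have h₂ : p + 3 ≠ 0 := by positivity
  have h₃ : 3 + p ≠ 0 := by positivity
  field_simp
  ring

theorem rot_ratio_eq {p C x : ℝ} (hp : 0 ≤ p) {n : ℕ} (hn : 0 < n) :
    ((n : ℝ) ^ (-p / ((2 * p + 3) * (p + 3))) * x) / (C * (n : ℝ) ^ (-1 / (3 + p)))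
      = x / (C * (n : ℝ) ^ (-1 / (2 * p + 3))) := by
  have hn : (0 : ℝ) < n := by exact_mod_cast hn
  rw [← rot_exponent_add hp, Real.rpow_add hn, mul_left_comm C,
    mul_div_mul_left _ _ (Real.rpow_pos_of_pos hn _).ne']

section CEBandwidth

variable {p C : ℝ}

theorem inv_natCast_mul_ceBandwidth_isBigO (hp : 0 ≤ p) (hC : 0 ≤ C) :
    (fun n : ℕ => ((n : ℝ) * (C * (n : ℝ) ^ (-1 / (3 + p))))⁻¹) =O[atTop]
      fun n : ℕ => (n : ℝ) ^ (-(2 + p) / (3 + p)) := by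
  have hexp : -1 + -1 / (3 + p) * -1 = -(2 + p) / (3 + p) := by
    have : 3 + p ≠ 0 := by positivity
    field_simp
    ring
  refine (natCast_rpow_mul_bandwidth_rpow_isBigO hC hexp.le).congr_left fun n => ?_
  rw [Real.rpow_neg_one, Real.rpow_neg_one, ← mul_inv]

theorem natCast_mul_ceBandwidth_rpow_isBigO (hp : 0 ≤ p) (hC : 0 ≤ C) {s : ℝ} (hs : 0 ≤ s) :
    (fun n : ℕ => (n : ℝ) * (C * (n : ℝ) ^ (-1 / (3 + p))) ^ (5 + 2 * p + s)) =O[atTop]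
      fun n : ℕ => (n : ℝ) ^ (-(2 + p) / (3 + p)) := by
  have hp3 : 3 + p ≠ 0 := by positivity
  have hexp : -(2 + p) / (3 + p) - (1 + -1 / (3 + p) * (5 + 2 * p + s)) = s / (3 + p) := by
    field_simp
    ring
  have hle : 1 + -1 / (3 + p) * (5 + 2 * p + s) ≤ -(2 + p) / (3 + p) := by
    rw [← sub_nonneg, hexp]
    positivity
  refine (natCast_rpow_mul_bandwidth_rpow_isBigO hC hle).congr_left fun n => ?_
  rw [Real.rpow_one]

theorem ceBandwidth_rpow_isBigO (hp : 0 ≤ p) (hC : 0 ≤ C) {s : ℝ} (hs : 0 ≤ s) :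
    (fun n : ℕ => (C * (n : ℝ) ^ (-1 / (3 + p))) ^ (2 + p + s)) =O[atTop]
      fun n : ℕ => (n : ℝ) ^ (-(2 + p) / (3 + p)) := by
  have hp3 : 3 + p ≠ 0 := by positivity
  have hexp : -(2 + p) / (3 + p) - (0 + -1 / (3 + p) * (2 + p + s)) = s / (3 + p) := by
    field_simp
    ring
  have hle : 0 + -1 / (3 + p) * (2 + p + s) ≤ -(2 + p) / (3 + p) := by
    rw [← sub_nonneg, hexp]
    positivity
  refine (natCast_rpow_mul_bandwidth_rpow_isBigO hC hle).congr_left fun n => ?_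
  rw [Real.rpow_zero, one_mul]

theorem isBigO_of_coverage_expansion {a : ℝ} (hp : 0 ≤ p) (ha : 0 ≤ a) (hC : 0 ≤ C)
    {E Q1 Q2 Q3 e1 e2 : ℕ → ℝ} (hQ1 : BddSeq Q1) (hQ2 : BddSeq Q2) (hQ3 : BddSeq Q3)
    (he1 : e1 =o[atTop] fun n : ℕ => ((n : ℝ) * (C * (n : ℝ) ^ (-1 / (3 + p))))⁻¹)
    (he2 : e2 =O[atTop] fun n : ℕ =>
      (n : ℝ) * (C * (n : ℝ) ^ (-1 / (3 + p))) ^ (5 + 2 * p + 2 * a)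
        + (C * (n : ℝ) ^ (-1 / (3 + p))) ^ (2 + p + a))
    (hE : ∀ n : ℕ, E n
      = ((n : ℝ) * (C * (n : ℝ) ^ (-1 / (3 + p))))⁻¹ * Q1 n
        + (n : ℝ) * (C * (n : ℝ) ^ (-1 / (3 + p))) ^ (5 + 2 * p) * Q2 n
        + (C * (n : ℝ) ^ (-1 / (3 + p))) ^ (2 + p) * Q3 n
        + e1 n + e2 n) :
    E =O[atTop] fun n : ℕ => (n : ℝ) ^ (-(2 + p) / (3 + p)) := by
  have hinv := inv_natCast_mul_ceBandwidth_isBigO hp hC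
  have hmul := natCast_mul_ceBandwidth_rpow_isBigO hp hC le_rfl
  have hpow := ceBandwidth_rpow_isBigO hp hC le_rfl
  rw [add_zero] at hmul hpow
  have he2' := he2.trans ((natCast_mul_ceBandwidth_rpow_isBigO hp hC (by positivity)).add
    (ceBandwidth_rpow_isBigO hp hC ha))
  rw [funext hE]
  exact ((((hQ1.mul_isBigO hinv).add (hQ2.mul_isBigO hmul)).add
    (hQ3.mul_isBigO hpow)).add (he1.isBigO.trans hinv)).add he2'

end CEBandwidth

end RD

theorem ROT_bandwidth_CE_rate_general
    {Ω : Type} [MeasurableSpace Ω] (P : Measure Ω)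
    (M : RDModel Ω P) (c xl xu a : ℝ) (S p ν : ℕ)
    (f μp μm σ2p σ2m : ℝ → ℝ)
    (hRD : AssumptionRD P M c xl xu S a f μp μm σ2p σ2m)
    (K : ℝ → ℝ)
    (α z : ℝ)
    (ρ0 : ℝ)
    (C : ℝ) (hC : 0 < C)
    (hhatMSE : ℕ → Ω → ℝ)
    -- `ĥ_MSE / h_MSE →_P 1` where `h_MSE = C n^{-1/(2p+3)}`:
    (hconsist : TendstoInMeasure P
      (fun (n : ℕ) (ω : Ω) => hhatMSE n ω / (C * (n : ℝ) ^ (-(1 : ℝ) / (2 * p + 3))))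
      atTop (fun _ => (1 : ℝ))) :
    -- (i) `ĥ^rot_RBC / (C n^{-1/(3+p)}) →_P 1`, i.e. the rule-of-thumb bandwidth is of
    -- the coverage-error optimal order `n^{-1/(3+p)}`:
    TendstoInMeasure P
      (fun (n : ℕ) (ω : Ω) =>
        ((n : ℝ) ^ (-(p : ℝ) / ((2 * p + 3) * (p + 3))) * hhatMSE n ω)
          / (C * (n : ℝ) ^ (-(1 : ℝ) / (3 + p))))
      atTop (fun _ => (1 : ℝ)) ∧
    -- (ii) consequently, whenever the RBC coverage error expansion holds along this
    -- bandwidth sequence, `I_RBC(ĥ^rot_RBC)` has coverage error `O(n^{-(2+p)/(3+p)})`: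
    (∀ Q1 Q2 Q3 e1 e2 : ℕ → ℝ,
      BddSeq Q1 → BddSeq Q2 → BddSeq Q3 →
      (e1 =o[atTop] fun n : ℕ => ((n : ℝ) * (C * (n : ℝ) ^ (-(1 : ℝ) / (3 + p))))⁻¹) →
      (e2 =O[atTop] fun n : ℕ =>
        (n : ℝ) * (C * (n : ℝ) ^ (-(1 : ℝ) / (3 + p))) ^ ((5 : ℝ) + 2 * p + 2 * a)
          + (C * (n : ℝ) ^ (-(1 : ℝ) / (3 + p))) ^ ((2 : ℝ) + p + a)) →
      (∀ n : ℕ,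
        coverRBCrand P M K p ν c (tauParam xl xu μp μm ν c) z ρ0
            (fun m ω => (m : ℝ) ^ (-(p : ℝ) / ((2 * p + 3) * (p + 3))) * hhatMSE m ω) n
          - (1 - α)
        = ((n : ℝ) * (C * (n : ℝ) ^ (-(1 : ℝ) / (3 + p))))⁻¹ * Q1 n
          + (n : ℝ) * (C * (n : ℝ) ^ (-(1 : ℝ) / (3 + p))) ^ ((5 : ℝ) + 2 * p) * Q2 n
          + (C * (n : ℝ) ^ (-(1 : ℝ) / (3 + p))) ^ ((2 : ℝ) + p) * Q3 n
          + e1 n + e2 n) →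
      (fun n : ℕ =>
          coverRBCrand P M K p ν c (tauParam xl xu μp μm ν c) z ρ0
            (fun m ω => (m : ℝ) ^ (-(p : ℝ) / ((2 * p + 3) * (p + 3))) * hhatMSE m ω) n
          - (1 - α))
        =O[atTop] fun n : ℕ => (n : ℝ) ^ (-((2 : ℝ) + p) / (3 + p))) := by
  refine ⟨?_, fun Q1 Q2 Q3 e1 e2 hQ1 hQ2 hQ3 he1 he2 hcov =>
    isBigO_of_coverage_expansion (Nat.cast_nonneg p) hRD.h_a.1.le hC.le hQ1 hQ2 hQ3 he1 he2
      hcov⟩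
  refine hconsist.congr' ?_ EventuallyEq.rfl
  filter_upwards [eventually_gt_atTop 0] with n hn
  exact .of_forall fun ω => (rot_ratio_eq (Nat.cast_nonneg p) hn).symm

/-- Rule-of-thumb bandwidth attains the CE-optimal rate: if
`ĥ_MSE / h_MSE →_P 1` with `h_MSE = C n^{-1/(2p+3)}`, then the rescaled bandwidth
`ĥ^rot_RBC = n^{-p/((2p+3)(p+3))} ĥ_MSE` satisfies `ĥ^rot_RBC/(C n^{-1/(3+p)}) →_P 1`,
and under the coverage error expansion along this bandwidth sequence the interval
`I_RBC(ĥ^rot_RBC)` has coverage error of order `n^{-(2+p)/(3+p)}`. -/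
theorem ROT_bandwidth_CE_rate
    {Ω : Type} [MeasurableSpace Ω] (P : Measure Ω) [IsProbabilityMeasure P]
    (M : RDModel Ω P) (c xl xu a : ℝ) (S p ν : ℕ) (hνp : ν ≤ p) (hS : p + 2 ≤ S)
    (f μp μm σ2p σ2m : ℝ → ℝ)
    (hRD : AssumptionRD P M c xl xu S a f μp μm σ2p σ2m)
    (K : ℝ → ℝ) (hK : IsRDKernel p K)
    (α z : ℝ) (hα : α ∈ Set.Ioo (0 : ℝ) 1) (hz : Phi z = 1 - α / 2)
    (ρ0 : ℝ) (hρ0 : 0 < ρ0)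
    (C : ℝ) (hC : 0 < C)
    (hhatMSE : ℕ → Ω → ℝ)
    -- `ĥ_MSE / h_MSE →_P 1` where `h_MSE = C n^{-1/(2p+3)}`:
    (hconsist : TendstoInMeasure P
      (fun (n : ℕ) (ω : Ω) => hhatMSE n ω / (C * (n : ℝ) ^ (-(1 : ℝ) / (2 * p + 3))))
      atTop (fun _ => (1 : ℝ))) :
    -- (i) `ĥ^rot_RBC / (C n^{-1/(3+p)}) →_P 1`, i.e. the rule-of-thumb bandwidth is of
    -- the coverage-error optimal order `n^{-1/(3+p)}`:
    TendstoInMeasure P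
      (fun (n : ℕ) (ω : Ω) =>
        ((n : ℝ) ^ (-(p : ℝ) / ((2 * p + 3) * (p + 3))) * hhatMSE n ω)
          / (C * (n : ℝ) ^ (-(1 : ℝ) / (3 + p))))
      atTop (fun _ => (1 : ℝ)) ∧
    -- (ii) consequently, whenever the RBC coverage error expansion holds along this
    -- bandwidth sequence, `I_RBC(ĥ^rot_RBC)` has coverage error `O(n^{-(2+p)/(3+p)})`:
    (∀ Q1 Q2 Q3 e1 e2 : ℕ → ℝ,
      BddSeq Q1 → BddSeq Q2 → BddSeq Q3 →
      (e1 =o[atTop] fun n : ℕ => ((n : ℝ) * (C * (n : ℝ) ^ (-(1 : ℝ) / (3 + p))))⁻¹) →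
      (e2 =O[atTop] fun n : ℕ =>
        (n : ℝ) * (C * (n : ℝ) ^ (-(1 : ℝ) / (3 + p))) ^ ((5 : ℝ) + 2 * p + 2 * a)
          + (C * (n : ℝ) ^ (-(1 : ℝ) / (3 + p))) ^ ((2 : ℝ) + p + a)) →
      (∀ n : ℕ,
        coverRBCrand P M K p ν c (tauParam xl xu μp μm ν c) z ρ0
            (fun m ω => (m : ℝ) ^ (-(p : ℝ) / ((2 * p + 3) * (p + 3))) * hhatMSE m ω) n
          - (1 - α)
        = ((n : ℝ) * (C * (n : ℝ) ^ (-(1 : ℝ) / (3 + p))))⁻¹ * Q1 n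
          + (n : ℝ) * (C * (n : ℝ) ^ (-(1 : ℝ) / (3 + p))) ^ ((5 : ℝ) + 2 * p) * Q2 n
          + (C * (n : ℝ) ^ (-(1 : ℝ) / (3 + p))) ^ ((2 : ℝ) + p) * Q3 n
          + e1 n + e2 n) →
      (fun n : ℕ =>
          coverRBCrand P M K p ν c (tauParam xl xu μp μm ν c) z ρ0
            (fun m ω => (m : ℝ) ^ (-(p : ℝ) / ((2 * p + 3) * (p + 3))) * hhatMSE m ω) n
          - (1 - α))
        =O[atTop] fun n : ℕ => (n : ℝ) ^ (-((2 : ℝ) + p) / (3 + p))) :=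
  ROT_bandwidth_CE_rate_general P M c xl xu a S p ν f μp μm σ2p σ2m hRD K α z ρ0 C hC hhatMSE
    hconsist
end
end

section
/- (Exact fixed-n conditional variance of the robust bias-corrected estimator.) Fix n, bandwidths h > 0 and b > 0 with ρ = h/b, integers 0 ≤ ν ≤ p and q = p+1, and a kernel K. Condition on X₁,…,X_n such that G₊,p, G₋,p (order-p, bandwidth h) and G₊,q, G₋,q (order-q, bandwidth b) are all invertible. If, given X₁,…,X_n, the Yᵢ are independent with conditional variance σ₊²(X_i) when X_i ≥ c and σ₋²(X_i) when X_i < c, then V[τ̂_{ν,BC}(h) | X₁,…,X_n] = (n h^{1+2ν})^{-1} V_BC, where V_BC = (h/n)(ν!)² e_ν'( G₊,p^{-1} Ω_BC,₊ Σ₊ Ω_BC,₊' G₊,p^{-1} + G₋,p^{-1} Ω_BC,₋ Σ₋ Ω_BC,₋' G₋,p^{-1} ) e_ν with Ω_BC,± = Ω_p,± − ρ^{p+1} Λ_p,± e_{p+1}' G_q,±^{-1} Ω_q,±. -/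
/-!
Shared setup for "Optimal Bandwidth Choice for Robust Bias Corrected Inference
in Regression Discontinuity Designs" (Calonico, Cattaneo, Farrell).
-/

noncomputable section

open MeasureTheory ProbabilityTheory Filter Asymptotics Matrix Topology

open MeasureTheory ProbabilityTheory Filter Asymptotics Matrix Topology RD

/-- Kernel weight matrix `Ω_p = h⁻¹[(K r_p)(X_{h,1}), …, (K r_p)(X_{h,n})]`. -/
noncomputable def OmegaMat (K : ℝ → ℝ) (p : ℕ) {n : ℕ} (c h : ℝ) (x : Fin n → ℝ) :
    Matrix (Fin (p + 1)) (Fin n) ℝ :=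
  fun j i => h⁻¹ * K ((x i - c) / h) * ((x i - c) / h) ^ (j : ℕ)

/-- RBC weight matrix `Ω_BC = Ω_p - ρ^{p+1} Λ_p e_{p+1}' G_q⁻¹ Ω_q` with `q = p+1`,
`ρ = h/b`. -/
noncomputable def OmegaBCMat (K : ℝ → ℝ) (p : ℕ) {n : ℕ} (c h b : ℝ) (x : Fin n → ℝ) :
    Matrix (Fin (p + 1)) (Fin n) ℝ :=
  OmegaMat K p c h x -
    (h / b) ^ (p + 1) • Matrix.vecMulVec (LamVec K p 1 c h x)
      (fun i => b⁻¹ * K ((x i - c) / b) *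
        (evec (p + 1) (p + 1) ⬝ᵥ
          ((Gmat K (p + 1) c b x)⁻¹ *ᵥ rvec (p + 1) ((x i - c) / b))))

/-!
Both sides of `τ̂_{ν,BC}(h)` are linear in the outcomes: the bias estimate `B̂(b)` enters only
through `μ̂^{(p+1)}`, itself a linear smoother, so the estimator is `ν! h^{-ν} n⁻¹ (w₊ - w₋)'Y`
with `w± = e_ν' G±,p⁻¹ Ω_BC,±`. For independent outcomes the variance of a linear form is
`Σᵢ wᵢ² σ²(Xᵢ)`. Since `K₊` and `K₋` have disjoint supports, `w₊ᵢ` and `w₋ᵢ` never both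
differ from zero, so the cross terms vanish and the sum splits into the two sandwich forms
(using that `G±,p⁻¹` is symmetric).
-/

theorem Matrix.dotProduct_mulVec_mul_diagonal_mul_transpose {m l R : Type*} [Fintype m]
    [Fintype l] [DecidableEq l] [CommSemiring R] (e : m → R) (A : Matrix m l R) (d : l → R) :
    e ⬝ᵥ ((A * diagonal d * Aᵀ) *ᵥ e) = ∑ i, d i * (e ᵥ* A) i ^ 2 := by
  rw [← mulVec_mulVec, ← mulVec_mulVec, dotProduct_mulVec, mulVec_transpose]
  simp only [dotProduct, mulVec_diagonal]
  exact Finset.sum_congr rfl fun i _ => by ring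

theorem ProbabilityTheory.iIndepFun.variance_dotProduct {Ω ι : Type*} [MeasurableSpace Ω]
    [Fintype ι] {P : Measure Ω} {Y : ι → Ω → ℝ} (hindep : iIndepFun Y P)
    (hL2 : ∀ i, MemLp (Y i) 2 P) (w : ι → ℝ) :
    variance (fun ω => w ⬝ᵥ fun i => Y i ω) P = ∑ i, w i ^ 2 * variance (Y i) P := by
  have hsum : (fun ω => w ⬝ᵥ fun i => Y i ω) = ∑ i, fun ω => w i * Y i ω := by
    ext ω
    simp [dotProduct]
  rw [hsum, IndepFun.variance_sum (fun i _ => (hL2 i).const_mul (w i))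
    fun i _ j _ hij => (hindep.indepFun hij).comp (measurable_const_mul _)
      (measurable_const_mul _)]
  simp only [variance_const_mul]

namespace RD

theorem Gmat_transpose (K : ℝ → ℝ) (p : ℕ) {n : ℕ} (c h : ℝ) (x : Fin n → ℝ) :
    (Gmat K p c h x)ᵀ = Gmat K p c h x := by
  simp only [Gmat, transpose_smul, transpose_sum, transpose_vecMulVec]

theorem SvecLP_eq_smul_mulVec (K : ℝ → ℝ) (p : ℕ) {n : ℕ} (c h : ℝ) (x y : Fin n → ℝ) :
    SvecLP K p c h x y = (n : ℝ)⁻¹ • (OmegaMat K p c h x *ᵥ y) := by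
  ext j
  simp only [SvecLP, OmegaMat, mulVec, dotProduct, Pi.smul_apply, Finset.sum_apply,
    smul_eq_mul, rvec, mul_inv, Finset.mul_sum]
  refine Finset.sum_congr rfl fun i _ => ?_
  ring

theorem dotProduct_thetaHat (K : ℝ → ℝ) (p : ℕ) {n : ℕ} (c h : ℝ) (x y : Fin n → ℝ)
    (v : Fin (p + 1) → ℝ) :
    v ⬝ᵥ thetaHat K p c h x y
      = (n : ℝ)⁻¹ * ((v ᵥ* ((Gmat K p c h x)⁻¹ * OmegaMat K p c h x)) ⬝ᵥ y) := by
  rw [thetaHat, SvecLP_eq_smul_mulVec, mulVec_smul, dotProduct_smul, mulVec_mulVec,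
    dotProduct_mulVec, smul_eq_mul]

theorem vecMul_OmegaMat_apply (K : ℝ → ℝ) (p : ℕ) {n : ℕ} (c h : ℝ) (x : Fin n → ℝ)
    (u : Fin (p + 1) → ℝ) (i : Fin n) :
    (u ᵥ* OmegaMat K p c h x) i = h⁻¹ * K ((x i - c) / h) * (u ⬝ᵥ rvec p ((x i - c) / h)) := by
  simp only [vecMul, dotProduct, OmegaMat, rvec, Finset.mul_sum]
  exact Finset.sum_congr rfl fun j _ => by ring

theorem OmegaBCMat_eq (K : ℝ → ℝ) (p : ℕ) {n : ℕ} (c h b : ℝ) (x : Fin n → ℝ) :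
    OmegaBCMat K p c h b x = OmegaMat K p c h x - (h / b) ^ (p + 1) •
      vecMulVec (LamVec K p 1 c h x)
        (evec (p + 1) (p + 1) ᵥ* ((Gmat K (p + 1) c b x)⁻¹ * OmegaMat K (p + 1) c b x)) := by
  rw [OmegaBCMat]
  congr 3
  ext i
  rw [← vecMul_vecMul, vecMul_OmegaMat_apply, dotProduct_mulVec]

def rbcWeights (K : ℝ → ℝ) (p ν : ℕ) {n : ℕ} (c h b : ℝ) (x : Fin n → ℝ) : Fin n → ℝ :=
  evec p ν ᵥ* ((Gmat K p c h x)⁻¹ * OmegaBCMat K p c h b x)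

theorem rbcWeights_eq (K : ℝ → ℝ) (p ν : ℕ) {n : ℕ} (c h b : ℝ) (x : Fin n → ℝ) :
    rbcWeights K p ν c h b x
      = evec p ν ᵥ* ((Gmat K p c h x)⁻¹ * OmegaMat K p c h x)
        - ((h / b) ^ (p + 1) * (evec p ν ⬝ᵥ ((Gmat K p c h x)⁻¹ *ᵥ LamVec K p 1 c h x))) •
          (evec (p + 1) (p + 1) ᵥ* ((Gmat K (p + 1) c b x)⁻¹ * OmegaMat K (p + 1) c b x)) := by
  rw [rbcWeights, OmegaBCMat_eq, Matrix.mul_sub, vecMul_sub, Matrix.mul_smul, vecMul_smul,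
    mul_vecMulVec, vecMul_vecMulVec, smul_smul]

theorem muHat_sub_bias_eq_dotProduct (K : ℝ → ℝ) (p ν : ℕ) {n : ℕ} (c h b : ℝ) (hh : h ≠ 0)
    (hb : b ≠ 0) (x y : Fin n → ℝ) :
    muHat K p ν c h x y - h ^ ((p : ℤ) + 1 - ν) *
        ((ν.factorial : ℝ) / ((p + 1).factorial : ℝ) *
          ((evec p ν ⬝ᵥ ((Gmat K p c h x)⁻¹ *ᵥ LamVec K p 1 c h x)) *
            muDerivHatTop K p c b x y))
      = ν.factorial * h ^ (-(ν : ℤ)) * (n : ℝ)⁻¹ * (rbcWeights K p ν c h b x ⬝ᵥ y) := by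
  rw [muHat, muDerivHatTop, dotProduct_thetaHat, dotProduct_thetaHat, rbcWeights_eq,
    sub_dotProduct, smul_dotProduct, smul_eq_mul]
  have hpow : h ^ ((p : ℤ) + 1 - ν) = h ^ (p + 1) * h ^ (-(ν : ℤ)) := by
    rw [← zpow_natCast, ← zpow_add₀ hh]
    push_cast
    ring_nf
  have hfac : ((p + 1).factorial : ℝ) ≠ 0 := by positivity
  have hbpow : b ^ (-((p : ℤ) + 1)) = (b ^ (p + 1))⁻¹ := by
    rw [← zpow_natCast, ← _root_.zpow_neg]
    push_cast
    rfl
  rw [hpow, hbpow, div_pow]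
  field_simp

theorem tauHatBC_eq_dotProduct (K : ℝ → ℝ) (p ν : ℕ) {n : ℕ} (c h b : ℝ) (hh : h ≠ 0)
    (hb : b ≠ 0) (x y : Fin n → ℝ) :
    tauHatBC K p ν c h b x y = ν.factorial * h ^ (-(ν : ℤ)) * (n : ℝ)⁻¹ *
      ((rbcWeights (Kp K) p ν c h b x - rbcWeights (Km K) p ν c h b x) ⬝ᵥ y) := by
  rw [sub_dotProduct, mul_sub, ← muHat_sub_bias_eq_dotProduct _ _ _ _ _ _ hh hb,
    ← muHat_sub_bias_eq_dotProduct _ _ _ _ _ _ hh hb, tauHatBC, tauHat, Bhat]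
  ring

theorem rbcWeights_apply_eq_zero {K : ℝ → ℝ} (p ν : ℕ) {n : ℕ} {c h b : ℝ} {x : Fin n → ℝ}
    {i : Fin n} (hKh : K ((x i - c) / h) = 0) (hKb : K ((x i - c) / b) = 0) :
    rbcWeights K p ν c h b x i = 0 := by
  rw [rbcWeights_eq, Pi.sub_apply, Pi.smul_apply, ← vecMul_vecMul, ← vecMul_vecMul,
    vecMul_OmegaMat_apply, vecMul_OmegaMat_apply, hKh, hKb]
  simp

theorem rbcWeights_Km_apply_eq_zero {K : ℝ → ℝ} (p ν : ℕ) {n : ℕ} {c h b : ℝ} (hh : 0 < h)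
    (hb : 0 < b) {x : Fin n → ℝ} {i : Fin n} (hi : c ≤ x i) :
    rbcWeights (Km K) p ν c h b x i = 0 := by
  have hKm : ∀ {s : ℝ}, 0 < s → Km K ((x i - c) / s) = 0 := fun hs =>
    if_neg (not_lt.2 (div_nonneg (sub_nonneg.2 hi) hs.le))
  exact rbcWeights_apply_eq_zero p ν (hKm hh) (hKm hb)

theorem rbcWeights_Kp_apply_eq_zero {K : ℝ → ℝ} (p ν : ℕ) {n : ℕ} {c h b : ℝ} (hh : 0 < h)
    (hb : 0 < b) {x : Fin n → ℝ} {i : Fin n} (hi : x i < c) :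
    rbcWeights (Kp K) p ν c h b x i = 0 := by
  have hKp : ∀ {s : ℝ}, 0 < s → Kp K ((x i - c) / s) = 0 := fun hs =>
    if_neg (not_le.2 (div_neg_of_neg_of_pos (sub_neg.2 hi) hs))
  exact rbcWeights_apply_eq_zero p ν (hKp hh) (hKp hb)

theorem evec_dotProduct_sandwich_mulVec (K : ℝ → ℝ) (p ν : ℕ) {n : ℕ} (c h b : ℝ)
    (x d : Fin n → ℝ) :
    evec p ν ⬝ᵥ (((Gmat K p c h x)⁻¹ * OmegaBCMat K p c h b x * diagonal d
        * (OmegaBCMat K p c h b x)ᵀ * (Gmat K p c h x)⁻¹) *ᵥ evec p ν)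
      = ∑ i, d i * rbcWeights K p ν c h b x i ^ 2 := by
  have hsymm : ((Gmat K p c h x)⁻¹)ᵀ = (Gmat K p c h x)⁻¹ := by
    rw [transpose_nonsing_inv, Gmat_transpose]
  have hfactor : (Gmat K p c h x)⁻¹ * OmegaBCMat K p c h b x * diagonal d
        * (OmegaBCMat K p c h b x)ᵀ * (Gmat K p c h x)⁻¹
      = ((Gmat K p c h x)⁻¹ * OmegaBCMat K p c h b x) * diagonal d
        * ((Gmat K p c h x)⁻¹ * OmegaBCMat K p c h b x)ᵀ := by
    rw [transpose_mul, hsymm, Matrix.mul_assoc _ _ (Gmat K p c h x)⁻¹]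
  rw [hfactor, dotProduct_mulVec_mul_diagonal_mul_transpose, rbcWeights]

end RD

theorem exact_conditional_variance_RBC_general
    {Ω : Type} [MeasurableSpace Ω] (P : Measure Ω)
    (n p ν : ℕ) (c h b : ℝ) (hh : 0 < h) (hb : 0 < b) (K : ℝ → ℝ)
    (x : Fin n → ℝ) (Y : Fin n → Ω → ℝ)
    (hL2 : ∀ i, MemLp (Y i) 2 P)
    (hindep : iIndepFun Y P)
    (σ2p σ2m : ℝ → ℝ)
    (hvar : ∀ i, variance (Y i) P = if c ≤ x i then σ2p (x i) else σ2m (x i)) :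
    variance (fun ω => tauHatBC K p ν c h b x (fun i => Y i ω)) P
      = ((n : ℝ) * h ^ (1 + 2 * ν))⁻¹ *
        ((h / (n : ℝ)) * (ν.factorial : ℝ) ^ 2 *
          (evec p ν ⬝ᵥ
            (((Gmat (Kp K) p c h x)⁻¹ * OmegaBCMat (Kp K) p c h b x
                * Matrix.diagonal (fun i => σ2p (x i))
                * (OmegaBCMat (Kp K) p c h b x)ᵀ * (Gmat (Kp K) p c h x)⁻¹
              + (Gmat (Km K) p c h x)⁻¹ * OmegaBCMat (Km K) p c h b x
                * Matrix.diagonal (fun i => σ2m (x i))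
                * (OmegaBCMat (Km K) p c h b x)ᵀ * (Gmat (Km K) p c h x)⁻¹)
              *ᵥ evec p ν))) := by
  have hscale : ((n : ℝ) * h ^ (1 + 2 * ν))⁻¹ * ((h / n) * (ν.factorial : ℝ) ^ 2)
      = ((ν.factorial : ℝ) * h ^ (-(ν : ℤ)) * (n : ℝ)⁻¹) ^ 2 := by
    rw [_root_.zpow_neg, zpow_natCast]
    field_simp
    ring
  have hsplit : ∀ i, (rbcWeights (Kp K) p ν c h b x - rbcWeights (Km K) p ν c h b x) i ^ 2
        * (if c ≤ x i then σ2p (x i) else σ2m (x i))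
      = σ2p (x i) * rbcWeights (Kp K) p ν c h b x i ^ 2
        + σ2m (x i) * rbcWeights (Km K) p ν c h b x i ^ 2 := by
    intro i
    split_ifs with hi
    · rw [Pi.sub_apply, RD.rbcWeights_Km_apply_eq_zero p ν hh hb hi]
      ring
    · rw [Pi.sub_apply, RD.rbcWeights_Kp_apply_eq_zero p ν hh hb (not_le.1 hi)]
      ring
  simp_rw [RD.tauHatBC_eq_dotProduct K p ν c h b hh.ne' hb.ne']
  rw [variance_const_mul, hindep.variance_dotProduct hL2, add_mulVec,
    dotProduct_add, RD.evec_dotProduct_sandwich_mulVec, RD.evec_dotProduct_sandwich_mulVec,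
    ← mul_assoc, hscale, ← Finset.sum_add_distrib]
  simp only [hvar, hsplit]

/-- Exact fixed-n conditional variance of the robust bias-corrected
estimator: conditionally on the design `x`, with independent outcomes having variances
`σ₊²(xᵢ)`/`σ₋²(xᵢ)` on each side of the cutoff,
`V[τ̂_{ν,BC}(h)] = (n h^{1+2ν})⁻¹ V_BC` with the RBC sandwich formula for `V_BC`. -/
theorem exact_conditional_variance_RBC
    {Ω : Type} [MeasurableSpace Ω] (P : Measure Ω) [IsProbabilityMeasure P]
    (n p ν : ℕ) (hν : ν ≤ p) (c h b : ℝ) (hh : 0 < h) (hb : 0 < b) (K : ℝ → ℝ)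
    (x : Fin n → ℝ) (Y : Fin n → Ω → ℝ)
    (hmeas : ∀ i, Measurable (Y i)) (hL2 : ∀ i, MemLp (Y i) 2 P)
    (hGpp : IsUnit (Gmat (Kp K) p c h x).det)
    (hGpm : IsUnit (Gmat (Km K) p c h x).det)
    (hGqp : IsUnit (Gmat (Kp K) (p + 1) c b x).det)
    (hGqm : IsUnit (Gmat (Km K) (p + 1) c b x).det)
    (hindep : iIndepFun Y P)
    (σ2p σ2m : ℝ → ℝ)
    (hvar : ∀ i, variance (Y i) P = if c ≤ x i then σ2p (x i) else σ2m (x i)) :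
    variance (fun ω => tauHatBC K p ν c h b x (fun i => Y i ω)) P
      = ((n : ℝ) * h ^ (1 + 2 * ν))⁻¹ *
        ((h / (n : ℝ)) * (ν.factorial : ℝ) ^ 2 *
          (evec p ν ⬝ᵥ
            (((Gmat (Kp K) p c h x)⁻¹ * OmegaBCMat (Kp K) p c h b x
                * Matrix.diagonal (fun i => σ2p (x i))
                * (OmegaBCMat (Kp K) p c h b x)ᵀ * (Gmat (Kp K) p c h x)⁻¹
              + (Gmat (Km K) p c h x)⁻¹ * OmegaBCMat (Km K) p c h b x
                * Matrix.diagonal (fun i => σ2m (x i))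
                * (OmegaBCMat (Km K) p c h b x)ᵀ * (Gmat (Km K) p c h x)⁻¹)
              *ᵥ evec p ν))) :=
  exact_conditional_variance_RBC_general P n p ν c h b hh hb K x Y hL2 hindep σ2p σ2m hvar
end
end
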